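/- arXiv:1710.05804 — 3 statements merged into one kernel-verified Lean document; each statement's English description precedes it below -/
import Mathlib

section
/- If A and B are two laminar families of subsets of a finite set S, and n is a positive integer, then there exists a subset A₀ of S such that for every set P in A ∪ B, the cardinality |A₀ ∩ P| satisfies ⌊|P|/n⌋ ≤ |A₀ ∩ P| ≤ ⌈|P|/n⌉. -/
/-!
Add the singletons of `S` to the first family and round the fractional solution `y ≡ 1/n`
step by step. In each family the members with integral `y`-sum are again laminar, and the
fractional elements of the fibre of such a member (the elements for which it is the smallest
such member) have integral sum, so they are never exactly one. Hence the fractional elements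
carry two families of disjoint blocks of size at least two, which impose fewer independent
linear conditions than there are fractional elements: some nonzero direction `d` supported on
them keeps every integral member sum fixed. Moving along `d` until the first member sum becomes
an integer keeps each sum between its floor and ceiling and makes one more sum integral.
-/

/-- A family of finite sets is laminar if any two members are nested or disjoint. -/
def LaminarFam {α : Type*} [DecidableEq α] (F : Set (Finset α)) : Prop :=
  ∀ A ∈ F, ∀ B ∈ F, A ⊆ B ∨ B ⊆ A ∨ A ∩ B = ∅

namespace LaminarFam

open Finset

variable {α : Type*} [DecidableEq α]

theorem mono {F G : Set (Finset α)} (hF : LaminarFam F) (hGF : G ⊆ F) :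
    LaminarFam G :=
  fun A hA B hB => hF A (hGF hA) B (hGF hB)

theorem union_range_singleton {F : Set (Finset α)} (hF : LaminarFam F) :
    LaminarFam (F ∪ Set.range ({·} : α → Finset α)) := by
  have hsingleton : ∀ (x : α) (B : Finset α), {x} ⊆ B ∨ {x} ∩ B = ∅ := fun x B => by
    by_cases hx : x ∈ B <;> simp [hx]
  rintro A (hA | ⟨x, rfl⟩) B (hB | ⟨y, rfl⟩)
  · exact hF A hA B hB
  · rcases hsingleton y A with h | h
    · exact Or.inr (Or.inl h)
    · exact Or.inr (Or.inr (inter_comm A _ ▸ h))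
  · exact (hsingleton x B).imp id Or.inr
  · exact (hsingleton x {y}).imp id Or.inr

def fiber (𝒯 : Finset (Finset α)) (P : Finset α) : Finset α :=
  P.filter fun x => ∀ Q ∈ 𝒯, x ∈ Q → P ⊆ Q

variable {𝒯 : Finset (Finset α)} {P : Finset α}

theorem fiber_subset : fiber 𝒯 P ⊆ P := filter_subset _ _

theorem pairwiseDisjoint_fiber : (𝒯 : Set (Finset α)).PairwiseDisjoint (fiber 𝒯) :=
  fun P hP Q hQ hne => disjoint_left.2 fun _ hxP hxQ =>
    hne (subset_antisymm ((mem_filter.1 hxP).2 Q hQ (fiber_subset hxQ))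
      ((mem_filter.1 hxQ).2 P hP (fiber_subset hxP)))

theorem exists_mem_fiber (h : LaminarFam (𝒯 : Set (Finset α))) (hP : P ∈ 𝒯)
    {x : α} (hx : x ∈ P) : ∃ Q ∈ 𝒯, Q ⊆ P ∧ x ∈ fiber 𝒯 Q := by
  obtain ⟨Q, hQ, hmin⟩ := exists_min_image (𝒯.filter (x ∈ ·)) card ⟨P, mem_filter.2 ⟨hP, hx⟩⟩
  rw [mem_filter] at hQ
  have hQfib : x ∈ fiber 𝒯 Q := by
    refine mem_filter.2 ⟨hQ.2, fun Q' hQ' hxQ' => ?_⟩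
    rcases h Q hQ.1 Q' hQ' with hsub | hsub | hdisj
    · exact hsub
    · exact (eq_of_subset_of_card_le hsub (hmin Q' (mem_filter.2 ⟨hQ', hxQ'⟩))).ge
    · simpa [hdisj] using mem_inter.2 ⟨hQ.2, hxQ'⟩
  exact ⟨Q, hQ.1, (mem_filter.1 hQfib).2 P hP hx, hQfib⟩

theorem sum_eq_sum_sum_fiber {M : Type*} [AddCommMonoid M]
    (h : LaminarFam (𝒯 : Set (Finset α))) (hP : P ∈ 𝒯) (f : α → M) :
    ∑ x ∈ P, f x = ∑ Q ∈ 𝒯 with Q ⊆ P, ∑ x ∈ fiber 𝒯 Q, f x := by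
  have hcover : (𝒯.filter (· ⊆ P)).biUnion (fiber 𝒯) = P := by
    refine Subset.antisymm (biUnion_subset.2 fun Q hQ => fiber_subset.trans (mem_filter.1 hQ).2)
      fun x hx => ?_
    obtain ⟨Q, hQ, hQP, hxQ⟩ := h.exists_mem_fiber hP hx
    exact mem_biUnion.2 ⟨Q, mem_filter.2 ⟨hQ, hQP⟩, hxQ⟩
  rw [← sum_biUnion (pairwiseDisjoint_fiber.subset (coe_subset.2 (filter_subset _ _))), hcover]

theorem sum_fiber_mem {M : Type*} [AddCommGroup M] (H : AddSubgroup M) {f : α → M}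
    (h : LaminarFam (𝒯 : Set (Finset α))) (hsum : ∀ P ∈ 𝒯, ∑ x ∈ P, f x ∈ H) (hP : P ∈ 𝒯) :
    ∑ x ∈ fiber 𝒯 P, f x ∈ H := by
  induction P using Finset.strongInduction with
  | H P ih =>
    have hself : P ∈ 𝒯.filter (· ⊆ P) := mem_filter.2 ⟨hP, Subset.rfl⟩
    have hsplit := h.sum_eq_sum_sum_fiber hP f
    rw [← add_sum_erase _ _ hself] at hsplit
    rw [eq_sub_of_add_eq hsplit.symm]
    refine sub_mem (hsum P hP) (sum_mem fun Q hQ => ?_)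
    obtain ⟨hne, hQ, hQP⟩ : Q ≠ P ∧ Q ∈ 𝒯 ∧ Q ⊆ P := by simpa using hQ
    exact ih Q (ssubset_of_subset_of_ne hQP hne) hQ

end LaminarFam

namespace NashWilliams

open Finset
open scoped Classical

variable {α : Type*} [DecidableEq α]

theorem exists_sum_eq_zero_of_card_lt {K : Type*} [Field K] (F : Finset α)
    (𝒳 : Finset (Finset α)) (h : #𝒳 < #F) :
    ∃ d : α → K, (∀ x ∉ F, d x = 0) ∧ (∃ x, d x ≠ 0) ∧ ∀ X ∈ 𝒳, ∑ x ∈ X, d x = 0 := by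
  let v : F → 𝒳 → K := fun x X => if (x : α) ∈ (X : Finset α) then 1 else 0
  have hv : ¬LinearIndependent K v := fun hli => by
    have := hli.fintype_card_le_finrank
    simp only [Module.finrank_fintype_fun_eq_card, Fintype.card_coe] at this
    omega
  obtain ⟨g, hg, x₀, hx₀⟩ := Fintype.not_linearIndependent_iff.1 hv
  set d : α → K := fun x => if hx : x ∈ F then g ⟨x, hx⟩ else 0
  have hd : ∀ x ∉ F, d x = 0 := fun x hx => dif_neg hx
  refine ⟨d, hd, ⟨x₀, by simpa [d] using hx₀⟩, fun X hX => ?_⟩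
  have hgX := congrFun hg ⟨X, hX⟩
  simp only [Finset.sum_apply, Pi.smul_apply, smul_eq_mul, mul_ite, mul_one, mul_zero, v] at hgX
  calc ∑ x ∈ X, d x = ∑ x ∈ F, if x ∈ X then d x else 0 := by
        rw [← sum_filter]
        refine (sum_subset (fun x hx => (mem_filter.1 hx).2) fun x hxX hx => ?_).symm
        exact hd x fun hxF => hx (mem_filter.2 ⟨hxF, hxX⟩)
    _ = 0 := by rw [← sum_coe_sort]; simpa [d] using hgX

theorem two_mul_card_le_card_biUnion {𝒳 : Finset (Finset α)}
    (hdisj : (𝒳 : Set (Finset α)).PairwiseDisjoint id) (h2 : ∀ X ∈ 𝒳, 2 ≤ #X) :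
    2 * #𝒳 ≤ #(𝒳.biUnion id) := by
  rw [card_biUnion hdisj, mul_comm, ← smul_eq_mul]
  exact card_nsmul_le_sum _ _ _ h2

theorem biUnion_eq_of_two_mul_card_eq {F : Finset α} {𝒳 : Finset (Finset α)}
    (hdisj : (𝒳 : Set (Finset α)).PairwiseDisjoint id) (hF : ∀ X ∈ 𝒳, X ⊆ F)
    (h2 : ∀ X ∈ 𝒳, 2 ≤ #X) (hcard : #F ≤ 2 * #𝒳) : 𝒳.biUnion id = F :=
  eq_of_subset_of_card_le (biUnion_subset.2 hF)
    (hcard.trans (two_mul_card_le_card_biUnion hdisj h2))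

theorem exists_sum_eq_zero_of_disjoint_blocks {K : Type*} [Field K] {F : Finset α}
    (hF : F.Nonempty) {𝒳 𝒴 : Finset (Finset α)}
    (h𝒳 : (𝒳 : Set (Finset α)).PairwiseDisjoint id) (h𝒴 : (𝒴 : Set (Finset α)).PairwiseDisjoint id)
    (h𝒳F : ∀ X ∈ 𝒳, X ⊆ F) (h𝒴F : ∀ X ∈ 𝒴, X ⊆ F)
    (h𝒳2 : ∀ X ∈ 𝒳, 2 ≤ #X) (h𝒴2 : ∀ X ∈ 𝒴, 2 ≤ #X) :
    ∃ d : α → K, (∀ x ∉ F, d x = 0) ∧ (∃ x, d x ≠ 0) ∧ ∀ X ∈ 𝒳 ∪ 𝒴, ∑ x ∈ X, d x = 0 := by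
  by_cases hlt : #(𝒳 ∪ 𝒴) < #F
  · exact exists_sum_eq_zero_of_card_lt F _ hlt
  -- Otherwise `𝒳` and `𝒴` are disjoint pairings covering `F`, and the constraint of one
  -- block is implied by the others, since both families sum to `∑ x ∈ F, d x`.
  have hunion := card_union_add_card_inter 𝒳 𝒴
  have hFpos := hF.card_pos
  have hX := two_mul_card_le_card_biUnion h𝒳 h𝒳2
  have hY := two_mul_card_le_card_biUnion h𝒴 h𝒴2
  have hXF : #(𝒳.biUnion id) ≤ #F := card_le_card (biUnion_subset.2 h𝒳F)
  have hYF : #(𝒴.biUnion id) ≤ #F := card_le_card (biUnion_subset.2 h𝒴F)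
  have hdisj : Disjoint 𝒳 𝒴 := by
    rw [disjoint_iff_inter_eq_empty, ← card_eq_zero]; omega
  obtain ⟨Y₀, hY₀⟩ : 𝒴.Nonempty := by rw [← card_pos]; omega
  obtain ⟨d, hdF, hd0, hd⟩ := exists_sum_eq_zero_of_card_lt (K := K) F ((𝒳 ∪ 𝒴).erase Y₀)
    (by rw [card_erase_of_mem (mem_union_right _ hY₀)]; omega)
  have hcovX := biUnion_eq_of_two_mul_card_eq h𝒳 h𝒳F h𝒳2 (by omega)
  have hcovY := biUnion_eq_of_two_mul_card_eq h𝒴 h𝒴F h𝒴2 (by omega)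
  have hd' : ∀ X ∈ 𝒳 ∪ 𝒴, X ≠ Y₀ → ∑ x ∈ X, d x = 0 := fun X hX hne =>
    hd X (mem_erase.2 ⟨hne, hX⟩)
  refine ⟨d, hdF, hd0, fun X hX => ?_⟩
  obtain rfl | hne := eq_or_ne X Y₀
  · calc ∑ x ∈ X, d x = ∑ Y ∈ 𝒴, ∑ x ∈ Y, d x :=
          (sum_eq_single_of_mem X hY₀ fun Y hY hne => hd' Y (mem_union_right _ hY) hne).symm
      _ = ∑ x ∈ F, d x := by rw [← hcovY]; exact (sum_biUnion h𝒴).symm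
      _ = ∑ Y ∈ 𝒳, ∑ x ∈ Y, d x := by rw [← hcovX]; exact sum_biUnion h𝒳
      _ = 0 := sum_eq_zero fun Y hY => hd' Y (mem_union_left _ hY) fun h =>
          disjoint_left.1 hdisj hY (h ▸ hY₀)
  · exact hd' X hX hne

local notation "ℤℚ" => AddMonoidHom.range (Int.castAddHom ℚ)

theorem exists_add_mul_mem_int {ι : Type*} (J : Finset ι) (a b : ι → ℚ)
    (hJ : ∃ j ∈ J, b j ≠ 0) :
    ∃ t : ℚ, (∀ j ∈ J, ⌊a j⌋ ≤ a j + t * b j ∧ a j + t * b j ≤ ⌈a j⌉) ∧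
      ∃ j ∈ J, b j ≠ 0 ∧ a j + t * b j ∈ ℤℚ := by
  -- `τ j` is the time at which `a j + t * b j` reaches the integer it is moving towards.
  set τ : ι → ℚ := fun j => ((if 0 < b j then (⌈a j⌉ : ℚ) else ⌊a j⌋) - a j) / b j
  have hτ : ∀ j, b j ≠ 0 → a j + τ j * b j = if 0 < b j then (⌈a j⌉ : ℚ) else ⌊a j⌋ :=
    fun j hj => by rw [div_mul_cancel₀ _ hj]; ring
  obtain ⟨j₀, hj₀, hmin⟩ := exists_min_image (J.filter (b · ≠ 0)) τ
    (by simpa [Finset.Nonempty] using hJ)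
  rw [mem_filter] at hj₀
  have hτ₀ : 0 ≤ τ j₀ := by
    rcases hj₀.2.lt_or_gt with hneg | hpos
    · exact div_nonneg_of_nonpos (by simp [hneg.not_gt, Int.floor_le]) hneg.le
    · exact div_nonneg (by simp [hpos, Int.le_ceil]) hpos.le
  refine ⟨τ j₀, fun j hj => ?_, j₀, hj₀.1, hj₀.2, ?_⟩
  · have hfl := Int.floor_le (a j)
    have hcl := Int.le_ceil (a j)
    rcases lt_trichotomy (b j) 0 with hneg | hzero | hpos
    · have hle := hmin j (mem_filter.2 ⟨hj, hneg.ne⟩)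
      have := hτ j hneg.ne
      rw [if_neg hneg.not_gt] at this
      constructor <;> nlinarith
    · simp [hzero, hfl, hcl]
    · have hle := hmin j (mem_filter.2 ⟨hj, hpos.ne'⟩)
      have := hτ j hpos.ne'
      rw [if_pos hpos] at this
      constructor <;> nlinarith
  · rw [hτ j₀ hj₀.2]
    split_ifs
    exacts [⟨_, rfl⟩, ⟨_, rfl⟩]

open LaminarFam

noncomputable def fracBlocks (𝒯 : Finset (Finset α)) (y : α → ℚ) : Finset (Finset α) :=
  (𝒯.image fun P => (fiber 𝒯 P).filter (y · ∉ ℤℚ)).erase ∅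

section fracBlocks

variable {𝒯 : Finset (Finset α)} {y : α → ℚ} {X : Finset α}

theorem two_le_card_of_mem_fracBlocks (h : LaminarFam (𝒯 : Set (Finset α)))
    (hsum : ∀ P ∈ 𝒯, ∑ x ∈ P, y x ∈ ℤℚ) (hX : X ∈ fracBlocks 𝒯 y) : 2 ≤ #X := by
  obtain ⟨hne, hX⟩ := mem_erase.1 hX
  obtain ⟨P, hP, rfl⟩ := mem_image.1 hX
  have hfib := h.sum_fiber_mem _ hsum hP
  rw [← sum_filter_add_sum_filter_not _ (y · ∉ ℤℚ)] at hfib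
  have hfrac : ∑ x ∈ (fiber 𝒯 P).filter (y · ∉ ℤℚ), y x ∈ ℤℚ :=
    (add_mem_cancel_right (sum_mem fun x hx => not_not.1 (mem_filter.1 hx).2)).1 hfib
  have hcard : #((fiber 𝒯 P).filter (y · ∉ ℤℚ)) ≠ 1 := fun h1 => by
    obtain ⟨x, hx⟩ := card_eq_one.1 h1
    rw [hx, sum_singleton] at hfrac
    have hxX : x ∈ (fiber 𝒯 P).filter (y · ∉ ℤℚ) := hx ▸ mem_singleton_self x
    exact (mem_filter.1 hxX).2 hfrac
  have hpos := card_pos.2 (nonempty_iff_ne_empty.2 hne)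
  omega

theorem pairwiseDisjoint_fracBlocks :
    (fracBlocks 𝒯 y : Set (Finset α)).PairwiseDisjoint id := by
  rintro _ hX _ hY hne
  obtain ⟨P, hP, rfl⟩ := mem_image.1 (mem_of_mem_erase hX)
  obtain ⟨Q, hQ, rfl⟩ := mem_image.1 (mem_of_mem_erase hY)
  exact disjoint_filter_filter (pairwiseDisjoint_fiber hP hQ fun h => hne (h ▸ rfl))

theorem subset_of_mem_fracBlocks {U : Finset α} (hU : ∀ P ∈ 𝒯, P ⊆ U)
    (hX : X ∈ fracBlocks 𝒯 y) : X ⊆ U.filter (y · ∉ ℤℚ) := by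
  obtain ⟨P, hP, rfl⟩ := mem_image.1 (mem_of_mem_erase hX)
  exact filter_subset_filter _ (fiber_subset.trans (hU P hP))

theorem sum_eq_zero_of_fracBlocks (h : LaminarFam (𝒯 : Set (Finset α))) {d : α → ℚ}
    (hd : ∀ x, y x ∈ ℤℚ → d x = 0) (hblocks : ∀ X ∈ fracBlocks 𝒯 y, ∑ x ∈ X, d x = 0)
    {P : Finset α} (hP : P ∈ 𝒯) : ∑ x ∈ P, d x = 0 := by
  rw [h.sum_eq_sum_sum_fiber hP]
  refine sum_eq_zero fun Q hQ => ?_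
  rw [← sum_filter_of_ne (p := (y · ∉ ℤℚ)) fun x _ hx hy => hx (hd x hy)]
  by_cases hempty : (fiber 𝒯 Q).filter (y · ∉ ℤℚ) = ∅
  · rw [hempty, sum_empty]
  · exact hblocks _ (mem_erase.2 ⟨hempty, mem_image_of_mem _ (mem_filter.1 hQ).1⟩)

end fracBlocks

theorem exists_direction_of_integral_sums {𝒯₁ 𝒯₂ : Finset (Finset α)} {y : α → ℚ} {U : Finset α}
    (h₁ : LaminarFam (𝒯₁ : Set (Finset α))) (h₂ : LaminarFam (𝒯₂ : Set (Finset α)))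
    (hsum₁ : ∀ P ∈ 𝒯₁, ∑ x ∈ P, y x ∈ ℤℚ) (hsum₂ : ∀ P ∈ 𝒯₂, ∑ x ∈ P, y x ∈ ℤℚ)
    (hU₁ : ∀ P ∈ 𝒯₁, P ⊆ U) (hU₂ : ∀ P ∈ 𝒯₂, P ⊆ U) (hfrac : (U.filter (y · ∉ ℤℚ)).Nonempty) :
    ∃ d : α → ℚ, (∃ x ∈ U, d x ≠ 0) ∧ ∀ P ∈ 𝒯₁ ∪ 𝒯₂, ∑ x ∈ P, d x = 0 := by
  obtain ⟨d, hdF, ⟨x, hx⟩, hd⟩ := exists_sum_eq_zero_of_disjoint_blocks (K := ℚ) hfrac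
    pairwiseDisjoint_fracBlocks pairwiseDisjoint_fracBlocks
    (fun _ => subset_of_mem_fracBlocks hU₁) (fun _ => subset_of_mem_fracBlocks hU₂)
    (fun _ => two_le_card_of_mem_fracBlocks h₁ hsum₁)
    (fun _ => two_le_card_of_mem_fracBlocks h₂ hsum₂)
  have hdint : ∀ x, y x ∈ ℤℚ → d x = 0 := fun x hx => hdF x fun hxF => (mem_filter.1 hxF).2 hx
  refine ⟨d, ⟨x, ?_, hx⟩, fun P hP => ?_⟩
  · by_contra hxU
    exact hx (hdF x fun hxF => hxU (mem_filter.1 hxF).1)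
  rcases mem_union.1 hP with hP | hP
  · exact sum_eq_zero_of_fracBlocks h₁ hdint (fun X hX => hd X (mem_union_left _ hX)) hP
  · exact sum_eq_zero_of_fracBlocks h₂ hdint (fun X hX => hd X (mem_union_right _ hX)) hP

noncomputable def nonIntegral (𝒞 : Finset (Finset α)) (y : α → ℚ) : Finset (Finset α) :=
  𝒞.filter fun P => ∑ x ∈ P, y x ∉ ℤℚ

section rounding

variable {𝒜 ℬ : Finset (Finset α)} (h𝒜 : LaminarFam (𝒜 : Set (Finset α)))
  (hℬ : LaminarFam (ℬ : Set (Finset α))) (hsingle : ∀ P ∈ 𝒜 ∪ ℬ, ∀ x ∈ P, {x} ∈ 𝒜)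
include h𝒜 hℬ hsingle

theorem exists_rounding_step {y : α → ℚ} (hy : (nonIntegral (𝒜 ∪ ℬ) y).Nonempty) :
    ∃ y' : α → ℚ, (∀ P ∈ 𝒜 ∪ ℬ, ⌊∑ x ∈ P, y x⌋ ≤ ∑ x ∈ P, y' x ∧ ∑ x ∈ P, y' x ≤ ⌈∑ x ∈ P, y x⌉) ∧
      nonIntegral (𝒜 ∪ ℬ) y' ⊂ nonIntegral (𝒜 ∪ ℬ) y := by
  set U := (𝒜 ∪ ℬ).biUnion id
  have hfrac : (U.filter (y · ∉ ℤℚ)).Nonempty := by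
    obtain ⟨P, hP⟩ := hy
    rw [nonIntegral, mem_filter] at hP
    obtain ⟨x, hxP, hx⟩ : ∃ x ∈ P, y x ∉ ℤℚ := by
      by_contra! h
      exact hP.2 (sum_mem h)
    exact ⟨x, mem_filter.2 ⟨mem_biUnion.2 ⟨P, hP.1, hxP⟩, hx⟩⟩
  obtain ⟨d, ⟨x₀, hx₀U, hx₀⟩, hd⟩ := exists_direction_of_integral_sums (𝒯₁ := 𝒜.filter _) (𝒯₂ := ℬ.filter _)
    (h𝒜.mono (coe_subset.2 (filter_subset _ _))) (hℬ.mono (coe_subset.2 (filter_subset _ _)))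
    (fun P hP => (mem_filter.1 hP).2) (fun P hP => (mem_filter.1 hP).2)
    (fun P hP => subset_biUnion_of_mem id (mem_union_left _ (mem_filter.1 hP).1))
    (fun P hP => subset_biUnion_of_mem id (mem_union_right _ (mem_filter.1 hP).1)) hfrac
  have hdint : ∀ P ∈ 𝒜 ∪ ℬ, ∑ x ∈ P, y x ∈ ℤℚ → ∑ x ∈ P, d x = 0 := by
    intro P hP hPint
    rcases mem_union.1 hP with hP | hP
    · exact hd P (mem_union_left _ (mem_filter.2 ⟨hP, hPint⟩))
    · exact hd P (mem_union_right _ (mem_filter.2 ⟨hP, hPint⟩))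
  have hJ : ∃ P ∈ 𝒜 ∪ ℬ, ∑ x ∈ P, d x ≠ 0 := by
    obtain ⟨P, hP, hx₀P⟩ := mem_biUnion.1 hx₀U
    exact ⟨{x₀}, mem_union_left _ (hsingle P hP x₀ hx₀P), by rwa [sum_singleton]⟩
  obtain ⟨t, hbounds, P₀, hP₀, hd₀, hint₀⟩ :=
    exists_add_mul_mem_int (𝒜 ∪ ℬ) (fun P => ∑ x ∈ P, y x) (fun P => ∑ x ∈ P, d x) hJ
  have hsum : ∀ P : Finset α, ∑ x ∈ P, (y x + t * d x) = ∑ x ∈ P, y x + t * ∑ x ∈ P, d x :=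
    fun P => by rw [sum_add_distrib, mul_sum]
  refine ⟨fun x => y x + t * d x, fun P hP => hsum P ▸ hbounds P hP, ?_⟩
  rw [ssubset_iff_of_subset]
  · refine ⟨P₀, mem_filter.2 ⟨hP₀, fun hint => hd₀ (hdint P₀ hP₀ hint)⟩, ?_⟩
    simp only [nonIntegral, mem_filter, hsum, not_and, not_not]
    exact fun _ => hint₀
  · intro P hP
    simp only [nonIntegral, mem_filter, hsum] at hP ⊢
    exact ⟨hP.1, fun hint => hP.2 (by rw [hdint P hP.1 hint, mul_zero, add_zero]; exact hint)⟩

theorem exists_int_rounding (y : α → ℚ) :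
    ∃ z : α → ℤ, ∀ P ∈ 𝒜 ∪ ℬ, ⌊∑ x ∈ P, y x⌋ ≤ ∑ x ∈ P, z x ∧ ∑ x ∈ P, z x ≤ ⌈∑ x ∈ P, y x⌉ := by
  induction hn : #(nonIntegral (𝒜 ∪ ℬ) y) using Nat.strong_induction_on generalizing y with
  | _ n ih =>
  obtain hy | hy := (nonIntegral (𝒜 ∪ ℬ) y).eq_empty_or_nonempty
  · have hint : ∀ P ∈ 𝒜 ∪ ℬ, ∑ x ∈ P, y x ∈ ℤℚ := fun P hP => by
      by_contra h
      have hP' : P ∈ nonIntegral (𝒜 ∪ ℬ) y := mem_filter.2 ⟨hP, h⟩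
      simp [hy] at hP'
    refine ⟨fun x => ⌊y x⌋, fun P hP => ?_⟩
    have hfloor : ∀ x ∈ P, (⌊y x⌋ : ℚ) = y x := fun x hx => by
      obtain ⟨k, hk⟩ := hint {x} (mem_union_left _ (hsingle P hP x hx))
      rw [sum_singleton] at hk
      simp [← hk]
    have hcast : ∑ x ∈ P, y x = ((∑ x ∈ P, ⌊y x⌋ : ℤ) : ℚ) := by
      push_cast
      exact (sum_congr rfl hfloor).symm
    rw [hcast, Int.floor_intCast, Int.ceil_intCast]
    exact ⟨le_rfl, le_rfl⟩
  · obtain ⟨y', hbounds, hlt⟩ := exists_rounding_step h𝒜 hℬ hsingle hy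
    obtain ⟨z, hz⟩ := ih _ (hn ▸ card_lt_card hlt) y' rfl
    exact ⟨z, fun P hP => ⟨(Int.le_floor.2 (hbounds P hP).1).trans (hz P hP).1,
      (hz P hP).2.trans (Int.ceil_le.2 (hbounds P hP).2)⟩⟩

end rounding

theorem sum_eq_card_filter_inter {S P : Finset α} {z : α → ℤ} (hPS : P ⊆ S)
    (hz : ∀ x ∈ P, z x = 0 ∨ z x = 1) : ∑ x ∈ P, z x = #(S.filter (z · = 1) ∩ P) := by
  rw [filter_inter, inter_eq_right.2 hPS, card_filter, Nat.cast_sum]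
  refine sum_congr rfl fun x hx => ?_
  rcases hz x hx with h | h <;> simp [h]

theorem exists_subset_rounding {S : Finset α} {𝒜 ℬ : Finset (Finset α)}
    (h𝒜 : LaminarFam (𝒜 : Set (Finset α))) (hℬ : LaminarFam (ℬ : Set (Finset α)))
    (hS : ∀ P ∈ 𝒜 ∪ ℬ, P ⊆ S) (y : α → ℚ) (hy : ∀ x ∈ S, 0 ≤ y x ∧ y x ≤ 1) :
    ∃ A₀ ⊆ S, ∀ P ∈ 𝒜 ∪ ℬ, ⌊∑ x ∈ P, y x⌋ ≤ #(A₀ ∩ P) ∧ #(A₀ ∩ P) ≤ ⌈∑ x ∈ P, y x⌉ := by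
  set 𝒮 := S.image ({·} : α → Finset α)
  have h𝒜𝒮 : LaminarFam (↑(𝒜 ∪ 𝒮) : Set (Finset α)) :=
    h𝒜.union_range_singleton.mono (by
      rw [coe_union, coe_image]
      exact Set.union_subset_union_right _ (Set.image_subset_range _ _))
  have hsingleton : ∀ x ∈ S, {x} ∈ 𝒜 ∪ 𝒮 := fun x hx => mem_union_right _ (mem_image_of_mem _ hx)
  have hS' : ∀ P ∈ 𝒜 ∪ 𝒮 ∪ ℬ, P ⊆ S := fun P hP => by
    simp only [𝒮, mem_union, mem_image] at hP
    rcases hP with (hP | ⟨x, hx, rfl⟩) | hP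
    exacts [hS P (mem_union_left _ hP), singleton_subset_iff.2 hx, hS P (mem_union_right _ hP)]
  obtain ⟨z, hz⟩ := exists_int_rounding h𝒜𝒮 hℬ (fun P hP x hx => hsingleton x (hS' P hP hx)) y
  have hz01 : ∀ x ∈ S, z x = 0 ∨ z x = 1 := fun x hx => by
    have := hz {x} (mem_union_left _ (hsingleton x hx))
    rw [sum_singleton, sum_singleton] at this
    have h0 : 0 ≤ ⌊y x⌋ := Int.floor_nonneg.2 (hy x hx).1
    have h1 : ⌈y x⌉ ≤ 1 := Int.ceil_le.2 (by exact_mod_cast (hy x hx).2)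
    omega
  refine ⟨S.filter (z · = 1), filter_subset _ _, fun P hP => ?_⟩
  rw [← sum_eq_card_filter_inter (hS P hP) fun x hx => hz01 x (hS P hP hx)]
  exact hz P (union_subset_union_left subset_union_left hP)

end NashWilliams

open Finset NashWilliams

theorem nash_williams_laminar_general {α : Type*} [DecidableEq α]
    (S : Finset α) (A B : Set (Finset α))
    (hA : LaminarFam A) (hB : LaminarFam B)
    (hAS : ∀ P ∈ A, P ⊆ S) (hBS : ∀ P ∈ B, P ⊆ S)
    (n : ℕ) :
    ∃ A₀ : Finset α, A₀ ⊆ S ∧ ∀ P ∈ A ∪ B,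
      (⌊(P.card : ℚ) / n⌋ ≤ ((A₀ ∩ P).card : ℤ) ∧
       ((A₀ ∩ P).card : ℤ) ≤ ⌈(P.card : ℚ) / n⌉) := by
  classical
  set 𝒜 := S.powerset.filter (· ∈ A)
  set ℬ := S.powerset.filter (· ∈ B)
  have hmem : ∀ P ∈ A ∪ B, P ∈ 𝒜 ∪ ℬ := by
    rintro P (hP | hP)
    · exact mem_union_left _ (mem_filter.2 ⟨mem_powerset.2 (hAS P hP), hP⟩)
    · exact mem_union_right _ (mem_filter.2 ⟨mem_powerset.2 (hBS P hP), hP⟩)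
  have h𝒜 : LaminarFam (𝒜 : Set (Finset α)) := hA.mono fun P hP => (mem_filter.1 hP).2
  have hℬ : LaminarFam (ℬ : Set (Finset α)) := hB.mono fun P hP => (mem_filter.1 hP).2
  have hS : ∀ P ∈ 𝒜 ∪ ℬ, P ⊆ S := fun P hP => by
    rcases mem_union.1 hP with hP | hP <;> exact mem_powerset.1 (mem_filter.1 hP).1
  obtain ⟨A₀, hA₀S, hA₀⟩ := exists_subset_rounding h𝒜 hℬ hS (fun _ => (n : ℚ)⁻¹)
    fun _ _ => ⟨by positivity, Nat.cast_inv_le_one n⟩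
  refine ⟨A₀, hA₀S, fun P hP => ?_⟩
  simpa [div_eq_mul_inv] using hA₀ P (hmem P hP)

/-- Nash-Williams' laminar family lemma: for two laminar families `A, B` of
subsets of a finite set `S` and a positive integer `n`, there is a subset
`A₀ ⊆ S` with `⌊|P|/n⌋ ≤ |A₀ ∩ P| ≤ ⌈|P|/n⌉` for every `P ∈ A ∪ B`. -/
theorem nash_williams_laminar {α : Type*} [DecidableEq α]
    (S : Finset α) (A B : Set (Finset α))
    (hA : LaminarFam A) (hB : LaminarFam B)
    (hAS : ∀ P ∈ A, P ⊆ S) (hBS : ∀ P ∈ B, P ⊆ S)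
    (n : ℕ) (hn : 0 < n) :
    ∃ A₀ : Finset α, A₀ ⊆ S ∧ ∀ P ∈ A ∪ B,
      (⌊(P.card : ℚ) / n⌋ ≤ ((A₀ ∩ P).card : ℤ) ∧
       ((A₀ ∩ P).card : ℤ) ≤ ⌈(P.card : ℚ) / n⌉) :=
  nash_williams_laminar_general S A B hA hB hAS hBS n
end

section
/- If the complete H-uniform multipartite hypergraph ΛK^H_{p₁,…,p_n} (with all edge sizes hᵢ ≥ 2) is regular, i.e., all vertices have the same degree, then all parts have the same size: p₁ = p₂ = ⋯ = p_n. -/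
open Finset

lemma split_sum {α : Type*} [DecidableEq α] (p : α → ℕ) (k : ℕ) {x : α} {s : Finset α}
    (hx : x ∉ s) :
    ∑ t ∈ powersetCard (k + 1) (insert x s), ∏ j ∈ t, p j
      = (∑ t ∈ powersetCard (k + 1) s, ∏ j ∈ t, p j)
        + p x * ∑ t ∈ powersetCard k s, ∏ j ∈ t, p j := by
  rw [Finset.powersetCard_succ_insert hx]
  rw [Finset.sum_union]
  · congr 1
    rw [Finset.sum_image]
    · rw [Finset.mul_sum]
      refine Finset.sum_congr rfl fun t ht => ?_
      have hxt : x ∉ t := fun hxt => hx ((Finset.mem_powersetCard.1 ht).1 hxt)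
      rw [Finset.prod_insert hxt]
    · intro t₁ h₁ t₂ h₂ he
      have hx₁ : x ∉ t₁ := fun hxt => hx ((Finset.mem_powersetCard.1 h₁).1 hxt)
      have hx₂ : x ∉ t₂ := fun hxt => hx ((Finset.mem_powersetCard.1 h₂).1 hxt)
      rw [← Finset.erase_insert hx₁, ← Finset.erase_insert hx₂, he]
  · rw [Finset.disjoint_right]
    intro t ht ht'
    obtain ⟨u, hu, rfl⟩ := Finset.mem_image.1 ht
    have : x ∉ insert x u := fun hxt => hx ((Finset.mem_powersetCard.1 ht').1 hxt)
    exact this (Finset.mem_insert_self _ _)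

/-- If `Λ K^H_{p₁,…,pₙ}` (all edge sizes `hᵢ ≥ 2`) is regular, i.e. the degree
`D a = ∑ᵢ λᵢ * ∑_{S} ∏_{j ∈ S} p j` (sum over `(hᵢ-1)`-subsets `S` of the other
parts) is the same for every part `a`, then all parts have the same size. -/
theorem regular_multipartite_equal_parts (n m : ℕ) (hm : 0 < m)
    (h lam : Fin m → ℕ) (p : Fin n → ℕ)
    (hdist : Function.Injective h)
    (hrange : ∀ i, 2 ≤ h i ∧ h i ≤ n)
    (hl : ∀ i, 1 ≤ lam i) (hp : ∀ a, 1 ≤ p a)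
    (hreg : ∀ a b : Fin n,
      (∑ i, lam i * ∑ s ∈ Finset.powersetCard (h i - 1)
          ((Finset.univ : Finset (Fin n)).erase a), ∏ j ∈ s, p j)
      = ∑ i, lam i * ∑ s ∈ Finset.powersetCard (h i - 1)
          ((Finset.univ : Finset (Fin n)).erase b), ∏ j ∈ s, p j) :
    ∀ a b : Fin n, p a = p b := by
  intro a b
  rcases eq_or_ne a b with rfl | hab
  · rfl
  have key := hreg a b
  set s0 : Finset (Fin n) := ((Finset.univ : Finset (Fin n)).erase a).erase b with hs0
  have hbs : b ∉ s0 := Finset.notMem_erase _ _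
  have has : a ∉ s0 := by
    simp only [hs0, Finset.mem_erase]
    tauto
  have hins_b : insert b s0 = (Finset.univ : Finset (Fin n)).erase a := by
    rw [hs0, Finset.insert_erase (Finset.mem_erase.2 ⟨Ne.symm hab, Finset.mem_univ _⟩)]
  have hins_a : insert a s0 = (Finset.univ : Finset (Fin n)).erase b := by
    ext x
    simp only [hs0, Finset.mem_insert, Finset.mem_erase, Finset.mem_univ, and_true]
    constructor
    · rintro (rfl | ⟨hxb, _⟩)
      · exact hab
      · exact hxb
    · intro hxb
      by_cases hxa : x = a
      · exact Or.inl hxa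
      · exact Or.inr ⟨hxb, hxa⟩
  have hcard : s0.card = n - 2 := by
    rw [hs0, Finset.card_erase_of_mem (Finset.mem_erase.2 ⟨Ne.symm hab, Finset.mem_univ _⟩),
      Finset.card_erase_of_mem (Finset.mem_univ _), Finset.card_univ, Fintype.card_fin]
    omega
  have hsplit : ∀ (i : Fin m) (x : Fin n), x ∉ s0 →
      ∑ s ∈ Finset.powersetCard (h i - 1) (insert x s0), ∏ j ∈ s, p j
        = (∑ s ∈ Finset.powersetCard (h i - 1) s0, ∏ j ∈ s, p j)
          + p x * ∑ s ∈ Finset.powersetCard (h i - 2) s0, ∏ j ∈ s, p j := by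
    intro i x hx
    have h2 : h i - 1 = (h i - 2) + 1 := by
      have := (hrange i).1; omega
    rw [h2]
    exact split_sum p _ hx
  rw [← hins_b, ← hins_a] at key
  have key2 : (∑ i, lam i * ∑ s ∈ Finset.powersetCard (h i - 1) s0, ∏ j ∈ s, p j)
      + p b * ∑ i, lam i * ∑ s ∈ Finset.powersetCard (h i - 2) s0, ∏ j ∈ s, p j
      = (∑ i, lam i * ∑ s ∈ Finset.powersetCard (h i - 1) s0, ∏ j ∈ s, p j)
      + p a * ∑ i, lam i * ∑ s ∈ Finset.powersetCard (h i - 2) s0, ∏ j ∈ s, p j := by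
    rw [Finset.mul_sum, Finset.mul_sum, ← Finset.sum_add_distrib, ← Finset.sum_add_distrib]
    have e1 : ∀ x : Fin n, x ∉ s0 →
        (∑ i, (lam i * ∑ s ∈ Finset.powersetCard (h i - 1) s0, ∏ j ∈ s, p j
          + p x * (lam i * ∑ s ∈ Finset.powersetCard (h i - 2) s0, ∏ j ∈ s, p j)))
        = ∑ i, lam i * ∑ s ∈ Finset.powersetCard (h i - 1) (insert x s0), ∏ j ∈ s, p j := by
      intro x hx
      refine Finset.sum_congr rfl fun i _ => ?_
      rw [hsplit i x hx, Nat.mul_add]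
      ring
    rw [e1 b hbs, e1 a has]
    exact key
  have hTpos : 0 < ∑ i, lam i * ∑ s ∈ Finset.powersetCard (h i - 2) s0, ∏ j ∈ s, p j := by
    have i0 : Fin m := ⟨0, hm⟩
    refine Finset.sum_pos' (fun i _ => Nat.zero_le _) ⟨i0, Finset.mem_univ _, ?_⟩
    have hne : (Finset.powersetCard (h i0 - 2) s0).Nonempty := by
      apply Finset.powersetCard_nonempty_of_le
      rw [hcard]
      have := (hrange i0).2
      omega
    have hsum : 0 < ∑ s ∈ Finset.powersetCard (h i0 - 2) s0, ∏ j ∈ s, p j := by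
      refine Finset.sum_pos (fun s _ => Finset.prod_pos fun j _ => hp j) hne
    exact Nat.mul_pos (hl i0) hsum
  have := Nat.add_left_cancel key2
  exact (Nat.eq_of_mul_eq_mul_right hTpos this).symm
end

section
/- Multipartite Baranyai theorem: the complete h-uniform n-partite hypergraph K^h_{n×p} (with parts of size p and edges all transversal h-subsets) is r-factorizable if and only if h divides n·p·r and r divides C(n−1, h−1)·p^{h−1}. -/
/-!
Necessity is double counting: a factor with `m` edges gives `h * m = n * p * r`, and a vertex lies
in `C(n-1, h-1) * p^(h-1)` edges, `r` of them in each factor.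

Sufficiency is Baranyai's argument. The parts are processed one at a time. After a set `A` of parts,
each factor is a multiset of partial edges, transversal sets of vertices in the parts of `A`, such
that over all factors each partial edge occurs as often as it is the trace on `A` of an edge, and
each vertex of a processed part has degree `r` in each factor. When a new part is added, which
copies of the partial edges get extended, and by which vertex of the new part, is decided by integer
rounding: a matrix of naturals whose row and column sums are divisible by `D` can be divided by `D`,
rounding each entry up or down, with exact row and column sums. The rounding is obtained by moving
mass around alternating cycles of entries not divisible by `D`.

The degree count used for necessity is the one-factor case of the construction.
-/

open Finset Function

lemma exists_first_repeat {α : Type*} [Finite α] (V : ℕ → α) :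
    ∃ S T, S < T ∧ V S = V T ∧ Set.InjOn V (Set.Iio T) := by
  classical
  have hex : ∃ T, ∃ S < T, V S = V T := by
    obtain ⟨x, y, hxy, hV⟩ := Finite.exists_ne_map_eq_of_infinite V
    rcases hxy.lt_or_gt with h | h
    exacts [⟨y, x, h, hV⟩, ⟨x, y, h, hV.symm⟩]
  obtain ⟨S, hST, hV⟩ := Nat.find_spec hex
  refine ⟨S, _, hST, hV, fun a ha b hb hab => ?_⟩
  by_contra hne
  rcases Ne.lt_or_gt hne with h | h
  exacts [Nat.find_min hex hb ⟨a, h, hab⟩, Nat.find_min hex ha ⟨b, h, hab.symm⟩]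

lemma add_one_mod_cases {t L : ℕ} (ht : t < L) :
    (t + 1) % L = t + 1 ∧ t + 1 < L ∨ (t + 1) % L = 0 ∧ t + 1 = L := by
  rcases (show t + 1 ≤ L from ht).lt_or_eq with h | h
  exacts [.inl ⟨Nat.mod_eq_of_lt h, h⟩, .inr ⟨by rw [h, Nat.mod_self], h⟩]

lemma add_le_mul_of_not_dvd {D y c ε : ℕ} (hy : y ≤ D * c) (hnd : ¬ D ∣ y)
    (hε : ε ≤ D - y % D) : y + ε ≤ D * c := by
  have hD : 0 < D := Nat.pos_of_ne_zero fun hD => hnd (by simp_all)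
  have hlt : y / D < c := (Nat.div_lt_iff_lt_mul hD).mpr <| by
    rw [mul_comm]; exact hy.lt_of_ne fun h => hnd (h ▸ dvd_mul_right D c)
  have := Nat.div_add_mod y D
  have := Nat.mod_lt y hD
  calc y + ε ≤ D * (y / D + 1) := by rw [mul_add_one]; omega
    _ ≤ D * c := Nat.mul_le_mul_left D hlt

lemma dvd_add_sub_mod {D : ℕ} (hD : 0 < D) (y : ℕ) : D ∣ y + (D - y % D) :=
  ⟨y / D + 1, by have := Nat.div_add_mod y D; have := Nat.mod_lt y hD; rw [mul_add_one]; omega⟩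

lemma exists_ne_not_dvd_of_dvd_sum {ι : Type*} [DecidableEq ι] {D : ℕ} {s : Finset ι}
    {f : ι → ℕ} (hs : D ∣ ∑ x ∈ s, f x) {a : ι} (ha : a ∈ s) (hfa : ¬ D ∣ f a) :
    ∃ b ∈ s, b ≠ a ∧ ¬ D ∣ f b := by
  by_contra! h
  rw [← add_sum_erase s f ha] at hs
  exact hfa ((Nat.dvd_add_left (dvd_sum fun b hb => h b (mem_of_mem_erase hb)
    (ne_of_mem_erase hb))).mp hs)

lemma sum_boole_eq_one_of_injective {ι κ : Type*} [Fintype ι] [DecidableEq κ] {f : ι → κ}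
    (hf : Injective f) (x : ι) : (∑ y, if f y = f x then 1 else 0 : ℕ) = 1 := by
  rw [sum_eq_single x (fun y _ hy => if_neg (hf.ne hy)) (by simp), if_pos rfl]

lemma sum_filter_insert_eq {α : Type*} [Fintype α] [DecidableEq α] (x : α) (w : Finset α → ℕ)
    (hw : ∀ e, x ∈ e → w e = 0) (e' : Finset α) :
    ∑ e with insert x e = e', w e = if x ∈ e' then w (e'.erase x) else 0 := by
  split_ifs with hx
  · rw [sum_eq_single_of_mem (e'.erase x) (by simp [insert_erase hx])]
    intro e he hne
    simp only [mem_filter, mem_univ, true_and] at he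
    refine hw e (by_contra fun hxe => hne ?_)
    rw [← he, erase_insert hxe]
  · exact sum_eq_zero fun e he => absurd ((mem_filter.mp he).2 ▸ mem_insert_self x e) hx

lemma Multiset.sum_card_filter_mem {α : Type*} [Fintype α] [DecidableEq α]
    (M : Multiset (Finset α)) : ∑ v, (M.filter (v ∈ ·)).card = (M.map Finset.card).sum := by
  induction M using Multiset.induction_on with
  | empty => simp
  | cons e M ih =>
    simp only [Multiset.filter_cons, Multiset.card_add, sum_add_distrib, ih, Multiset.map_cons,
      Multiset.sum_cons, apply_ite Multiset.card, Multiset.card_singleton, Multiset.card_zero]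
    rw [sum_boole, filter_mem_eq_inter, univ_inter, Nat.cast_id, add_comm]

lemma Multiset.card_filter_sum {ι α : Type*} (s : Finset ι) (F : ι → Multiset α) (P : α → Prop)
    [DecidablePred P] : ((∑ j ∈ s, F j).filter P).card = ∑ j ∈ s, ((F j).filter P).card := by
  simp only [← Multiset.countP_eq_card_filter, ← Multiset.coe_countPAddMonoidHom, map_sum]

lemma Nat.mul_choose_sub_one (n : ℕ) {h : ℕ} (hh : 1 ≤ h) :
    n * (n - 1).choose (h - 1) = h * n.choose h := by
  obtain ⟨h, rfl⟩ : ∃ h', h = h' + 1 := ⟨h - 1, by omega⟩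
  cases n with
  | zero => simp
  | succ n => simpa [mul_comm] using Nat.add_one_mul_choose_eq n h

section Cycle

variable {J E : Type*} (bad : J → E → Prop)

def IsAlternatingWalk (j : ℕ → J) (e : ℕ → E) : Prop :=
  ∀ t, bad (j t) (e t) ∧ bad (j (t + 1)) (e t) ∧ j (t + 1) ≠ j t ∧ e (t + 1) ≠ e t

lemma exists_isAlternatingWalk (hne : ∃ j e, bad j e)
    (hrow : ∀ j e, bad j e → ∃ e', e' ≠ e ∧ bad j e')
    (hcol : ∀ j e, bad j e → ∃ j', j' ≠ j ∧ bad j' e) :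
    ∃ (j : ℕ → J) (e : ℕ → E), IsAlternatingWalk bad j e := by
  have step : ∀ q : {q : J × E // bad q.1 q.2}, ∃ q' : {q : J × E // bad q.1 q.2},
      bad q'.1.1 q.1.2 ∧ q'.1.1 ≠ q.1.1 ∧ q'.1.2 ≠ q.1.2 := by
    rintro ⟨⟨j, e⟩, hq⟩
    obtain ⟨j', hj', hbj⟩ := hcol j e hq
    obtain ⟨e', he', hbe⟩ := hrow j' e hbj
    exact ⟨⟨(j', e'), hbe⟩, hbj, hj', he'⟩
  choose next hnext using step
  obtain ⟨j₀, e₀, h₀⟩ := hne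
  let W : ℕ → {q : J × E // bad q.1 q.2} := fun t => next^[t] ⟨(j₀, e₀), h₀⟩
  have hW : ∀ t, W (t + 1) = next (W t) := fun t => iterate_succ_apply' next t _
  exact ⟨fun t => (W t).1.1, fun t => (W t).1.2, fun t => ⟨(W t).2, by
    simpa only [hW] using hnext (W t)⟩⟩

lemma exists_alternating_cycle_of_window (ja : ℕ → J) (ea : ℕ → E) {L : ℕ} (hL : 1 < L)
    (hja : Set.InjOn ja (Set.Iio L)) (hea : Set.InjOn ea (Set.Iio L))
    (hdiag : ∀ t < L, bad (ja t) (ea t)) (hsub : ∀ t < L, bad (ja ((t + 1) % L)) (ea t)) :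
    ∃ L, 1 < L ∧ ∃ (ja : ZMod L → J) (ea : ZMod L → E), Injective ja ∧ Injective ea ∧
      ∀ m, bad (ja m) (ea m) ∧ bad (ja (m + 1)) (ea m) := by
  have : Fact (1 < L) := ⟨hL⟩
  have hval : ∀ m : ZMod L, m.val < L := ZMod.val_lt
  refine ⟨L, hL, fun m => ja m.val, fun m => ea m.val,
    fun a b hab => ZMod.val_injective L (hja (hval a) (hval b) hab),
    fun a b hab => ZMod.val_injective L (hea (hval a) (hval b) hab),
    fun m => ⟨hdiag _ (hval m), ?_⟩⟩
  simpa only [ZMod.val_add, ZMod.val_one] using hsub _ (hval m)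

variable {bad}

lemma IsAlternatingWalk.exists_cycle_of_row_repeat {j : ℕ → J} {e : ℕ → E}
    (hw : IsAlternatingWalk bad j e) {σ τ : ℕ} (hστ : σ < τ) (hrep : j σ = j τ)
    (hj : Set.InjOn j (Set.Iio τ)) (he : Set.InjOn e (Set.Iio τ)) :
    ∃ L, 1 < L ∧ ∃ (ja : ZMod L → J) (ea : ZMod L → E), Injective ja ∧ Injective ea ∧
      ∀ m, bad (ja m) (ea m) ∧ bad (ja (m + 1)) (ea m) := by
  have hL : 1 < τ - σ := by
    by_contra h
    obtain rfl : τ = σ + 1 := by omega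
    exact (hw σ).2.2.1 hrep.symm
  refine exists_alternating_cycle_of_window bad (fun t => j (σ + t)) (fun t => e (σ + t)) hL
    (fun a ha b hb hab => ?_) (fun a ha b hb hab => ?_) (fun t _ => (hw _).1) fun t ht => ?_
  · have := hj (by simp at ha ⊢; omega) (by simp at hb ⊢; omega) hab; omega
  · have := he (by simp at ha ⊢; omega) (by simp at hb ⊢; omega) hab; omega
  · rcases add_one_mod_cases ht with ⟨h, -⟩ | ⟨h, h'⟩
    · simpa only [h, ← add_assoc] using (hw (σ + t)).2.1
    · rw [h, add_zero, hrep, show τ = σ + t + 1 by omega]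
      exact (hw (σ + t)).2.1

lemma IsAlternatingWalk.exists_cycle_of_column_repeat {j : ℕ → J} {e : ℕ → E}
    (hw : IsAlternatingWalk bad j e) {σ τ : ℕ} (hστ : σ < τ) (hrep : e σ = e τ)
    (hj : Set.InjOn j (Set.Iic τ)) (he : Set.InjOn e (Set.Iio τ)) :
    ∃ L, 1 < L ∧ ∃ (ja : ZMod L → J) (ea : ZMod L → E), Injective ja ∧ Injective ea ∧
      ∀ m, bad (ja m) (ea m) ∧ bad (ja (m + 1)) (ea m) := by
  have hL : 1 < τ - σ := by
    by_contra h
    obtain rfl : τ = σ + 1 := by omega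
    exact (hw σ).2.2.2 hrep.symm
  have hlt : ∀ t, (t + 1) % (τ - σ) < τ - σ := fun t => Nat.mod_lt _ (by omega)
  -- the column `e σ = e τ` closing the cycle is listed last
  refine exists_alternating_cycle_of_window bad (fun t => j (σ + 1 + t))
    (fun t => e (σ + (t + 1) % (τ - σ))) hL (fun a ha b hb hab => ?_) (fun a ha b hb hab => ?_)
    (fun t ht => ?_) fun t _ => ?_
  · have := hj (by simp at ha ⊢; omega) (by simp at hb ⊢; omega) hab; omega
  · simp only [Set.mem_Iio] at ha hb
    have := he (by have := hlt a; simp; omega) (by have := hlt b; simp; omega) hab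
    rcases add_one_mod_cases ha with ⟨h1, h1'⟩ | ⟨h1, h1'⟩ <;>
      rcases add_one_mod_cases hb with ⟨h2, h2'⟩ | ⟨h2, h2'⟩ <;> rw [h1, h2] at this <;> omega
  · rcases add_one_mod_cases ht with ⟨h, -⟩ | ⟨h, h'⟩
    · rw [h, show σ + 1 + t = σ + (t + 1) by ring]
      exact (hw _).1
    · rw [h, add_zero, hrep, show σ + 1 + t = τ by omega]
      exact (hw τ).1
  · simpa only [add_right_comm σ 1] using (hw (σ + (t + 1) % (τ - σ))).2.1

variable (bad)

lemma exists_alternating_cycle [Finite J] [Finite E] (hne : ∃ j e, bad j e)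
    (hrow : ∀ j e, bad j e → ∃ e', e' ≠ e ∧ bad j e')
    (hcol : ∀ j e, bad j e → ∃ j', j' ≠ j ∧ bad j' e) :
    ∃ L, 1 < L ∧ ∃ (ja : ZMod L → J) (ea : ZMod L → E), Injective ja ∧ Injective ea ∧
      ∀ m, bad (ja m) (ea m) ∧ bad (ja (m + 1)) (ea m) := by
  obtain ⟨j, e, hw⟩ := exists_isAlternatingWalk bad hne hrow hcol
  -- the vertices `j 0, e 0, j 1, e 1, …` of the walk; the first repeated one closes a cycle
  let V : ℕ → J ⊕ E := fun t => if t % 2 = 0 then .inl (j (t / 2)) else .inr (e (t / 2))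
  have hV0 : ∀ t, V (2 * t) = .inl (j t) := fun t => by simp [V]
  have hV1 : ∀ t, V (2 * t + 1) = .inr (e t) := fun t => by
    simp [V, Nat.add_mod, show (2 * t + 1) / 2 = t by omega]
  obtain ⟨S, T, hST, hVST, hinj⟩ := exists_first_repeat V
  have hj : ∀ a b, 2 * a < T → 2 * b < T → j a = j b → a = b := fun a b ha hb hab => by
    have := hinj ha hb (by rw [hV0, hV0, hab]); omega
  have he : ∀ a b, 2 * a + 1 < T → 2 * b + 1 < T → e a = e b → a = b := fun a b ha hb hab => by
    have := hinj ha hb (by rw [hV1, hV1, hab]); omega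
  obtain ⟨σ, rfl | rfl⟩ := Nat.even_or_odd' S <;> obtain ⟨τ, rfl | rfl⟩ := Nat.even_or_odd' T
  · rw [hV0, hV0, Sum.inl.injEq] at hVST
    exact hw.exists_cycle_of_row_repeat (by omega) hVST
      (fun a ha b hb => hj a b (by simp at ha; omega) (by simp at hb; omega))
      (fun a ha b hb => he a b (by simp at ha; omega) (by simp at hb; omega))
  · exact absurd hVST (by rw [hV0, hV1]; exact Sum.inl_ne_inr)
  · exact absurd hVST (by rw [hV0, hV1]; exact Sum.inr_ne_inl)
  · rw [hV1, hV1, Sum.inr.injEq] at hVST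
    exact hw.exists_cycle_of_column_repeat (by omega) hVST
      (fun a ha b hb => hj a b (by simp at ha; omega) (by simp at hb; omega))
      (fun a ha b hb => he a b (by simp at ha; omega) (by simp at hb; omega))

end Cycle

section Rounding

variable {J E : Type*} [DecidableEq J] [DecidableEq E]

lemma sum_cycle_count_row [Fintype E] {L : ℕ} [NeZero L] (ja : ZMod L → J) (ea : ZMod L → E)
    (j : J) :
    ∑ e, ∑ m, (if (ja m, ea m) = (j, e) then 1 else 0 : ℕ) =
      ∑ e, ∑ m, if (ja (m + 1), ea m) = (j, e) then 1 else 0 := by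
  rw [sum_comm, sum_comm (γ := E)]
  simp only [Prod.ext_iff, ite_and, sum_ite_irrel, sum_ite_eq, sum_const_zero, mem_univ, if_true]
  exact (Equiv.sum_comp (Equiv.addRight 1) fun m => if ja m = j then 1 else 0).symm

lemma sum_cycle_count_column [Fintype J] {L : ℕ} [NeZero L] (ja : ZMod L → J) (ea : ZMod L → E)
    (e : E) :
    ∑ j, ∑ m, (if (ja m, ea m) = (j, e) then 1 else 0 : ℕ) =
      ∑ j, ∑ m, if (ja (m + 1), ea m) = (j, e) then 1 else 0 := by
  rw [sum_comm, sum_comm (γ := J)]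
  simp only [Prod.ext_iff, ite_and]
  simp

variable [Fintype J] [Fintype E]

lemma exists_shift_along_cycle {L : ℕ} [Fact (1 < L)] {ja : ZMod L → J} {ea : ZMod L → E}
    (hja : Injective ja) (hea : Injective ea) (Y : J → E → ℕ) {ε : ℕ}
    (hε : ∀ m, ε ≤ Y (ja (m + 1)) (ea m)) :
    ∃ Y' : J → E → ℕ, (∀ j, ∑ e, Y' j e = ∑ e, Y j e) ∧ (∀ e, ∑ j, Y' j e = ∑ j, Y j e) ∧
      (∀ m, Y' (ja m) (ea m) = Y (ja m) (ea m) + ε) ∧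
      (∀ m, Y' (ja (m + 1)) (ea m) + ε = Y (ja (m + 1)) (ea m)) ∧
      ∀ j e, (∀ m, (ja m, ea m) ≠ (j, e)) → (∀ m, (ja (m + 1), ea m) ≠ (j, e)) →
        Y' j e = Y j e := by
  have hdisj : ∀ m m', (ja m, ea m) ≠ (ja (m' + 1), ea m') := fun m m' h => by
    obtain ⟨h1, h2⟩ := Prod.mk.inj h
    obtain rfl := hea h2
    exact one_ne_zero (left_eq_add.mp (hja h1))
  -- how often a cell occurs on the cycle as a cell gaining, resp. losing, `ε`
  set pc : J × E → ℕ := fun q => ∑ m, if (ja m, ea m) = q then 1 else 0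
  set mc : J × E → ℕ := fun q => ∑ m, if (ja (m + 1), ea m) = q then 1 else 0
  have hpcP : ∀ m, pc (ja m, ea m) = 1 :=
    sum_boole_eq_one_of_injective fun m m' h => hea (congrArg Prod.snd h)
  have hmcM : ∀ m, mc (ja (m + 1), ea m) = 1 :=
    sum_boole_eq_one_of_injective fun m m' h => hea (congrArg Prod.snd h)
  have hmcP : ∀ m, mc (ja m, ea m) = 0 :=
    fun m => sum_eq_zero fun m' _ => if_neg (hdisj m m').symm
  have hpcM : ∀ m, pc (ja (m + 1), ea m) = 0 :=
    fun m => sum_eq_zero fun m' _ => if_neg (hdisj m' m)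
  set Y' : J → E → ℕ := fun j e => Y j e + ε * pc (j, e) - ε * mc (j, e)
  have hbalance : ∀ j e, Y' j e + ε * mc (j, e) = Y j e + ε * pc (j, e) := by
    intro j e
    by_cases h : ∃ m, (ja (m + 1), ea m) = (j, e)
    · obtain ⟨m, hm⟩ := h
      obtain ⟨rfl, rfl⟩ := Prod.mk.inj hm
      have := hε m
      simp only [Y', hpcM, hmcM]
      omega
    · push Not at h
      simp [Y', show mc (j, e) = 0 from sum_eq_zero fun m _ => if_neg (h m)]
  refine ⟨Y', fun j => ?_, fun e => ?_, fun m => by simp [Y', hpcP, hmcP],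
    fun m => by simp only [Y', hpcM, hmcM]; have := hε m; omega, fun j e h1 h2 => ?_⟩
  · have hsum : ∑ e, pc (j, e) = ∑ e, mc (j, e) := sum_cycle_count_row ja ea j
    have := congrArg (fun f => ∑ e, f e) (funext (hbalance j))
    simp only [sum_add_distrib, ← mul_sum, hsum] at this
    omega
  · have hsum : ∑ j, pc (j, e) = ∑ j, mc (j, e) := sum_cycle_count_column ja ea e
    have := congrArg (fun f => ∑ j, f j) (funext fun j => hbalance j e)
    simp only [sum_add_distrib, ← mul_sum, hsum] at this
    omega
  · simp only [Y', pc, mc, if_neg (h1 _), if_neg (h2 _), sum_const_zero]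
    simp

lemma exists_fewer_not_dvd {D : ℕ} (Y cap : J → E → ℕ) (hrow : ∀ j, D ∣ ∑ e, Y j e)
    (hcol : ∀ e, D ∣ ∑ j, Y j e) (hcap : ∀ j e, Y j e ≤ D * cap j e)
    (hbad : ∃ j e, ¬ D ∣ Y j e) :
    ∃ Y' : J → E → ℕ, (∀ j, ∑ e, Y' j e = ∑ e, Y j e) ∧ (∀ e, ∑ j, Y' j e = ∑ j, Y j e) ∧
      (∀ j e, Y' j e ≤ D * cap j e) ∧
      #{q : J × E | ¬ D ∣ Y' q.1 q.2} < #{q : J × E | ¬ D ∣ Y q.1 q.2} := by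
  have hD : 0 < D := Nat.pos_of_ne_zero fun hD => by
    obtain ⟨j, e, h⟩ := hbad
    exact h (by simpa [hD] using hcap j e)
  obtain ⟨L, hL, ja, ea, hja, hea, hcyc⟩ := exists_alternating_cycle (fun j e => ¬ D ∣ Y j e) hbad
    (fun j e h => by simpa using exists_ne_not_dvd_of_dvd_sum (hrow j) (mem_univ e) h)
    (fun j e h => by simpa using exists_ne_not_dvd_of_dvd_sum (hcol e) (mem_univ j) h)
  have : Fact (1 < L) := ⟨hL⟩
  -- the largest shift keeping every cell of the cycle between the same two multiples of `D`
  set up : ZMod L → ℕ := fun m => D - Y (ja m) (ea m) % D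
  set down : ZMod L → ℕ := fun m => Y (ja (m + 1)) (ea m) % D
  set ε := min (univ.inf' univ_nonempty up) (univ.inf' univ_nonempty down)
  have hεup : ∀ m, ε ≤ D - Y (ja m) (ea m) % D :=
    fun m => (min_le_left _ _).trans (inf'_le _ (mem_univ m))
  have hεdown : ∀ m, ε ≤ Y (ja (m + 1)) (ea m) % D :=
    fun m => (min_le_right _ _).trans (inf'_le _ (mem_univ m))
  obtain ⟨Y', hrow', hcol', hP, hM, hoff⟩ :=
    exists_shift_along_cycle hja hea Y fun m => (hεdown m).trans (Nat.mod_le _ _)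
  have hcells : ∀ j e, (∃ m, ja m = j ∧ ea m = e) ∨ (∃ m, ja (m + 1) = j ∧ ea m = e) ∨
      Y' j e = Y j e := by
    intro j e
    by_contra! h
    exact h.2.2 (hoff j e (fun m hm => h.1 m (Prod.mk.inj hm).1 (Prod.mk.inj hm).2)
      fun m hm => h.2.1 m (Prod.mk.inj hm).1 (Prod.mk.inj hm).2)
  refine ⟨Y', hrow', hcol', fun j e => ?_,
    card_lt_card <| (ssubset_iff_of_subset fun q => ?_).mpr ?_⟩
  · rcases hcells j e with ⟨m, rfl, rfl⟩ | ⟨m, rfl, rfl⟩ | h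
    · exact hP m ▸ add_le_mul_of_not_dvd (hcap _ _) (hcyc m).1 (hεup m)
    · have := hcap (ja (m + 1)) (ea m); have := hM m; omega
    · exact h ▸ hcap j e
  · simp only [mem_filter, mem_univ, true_and]
    intro hq hY
    rcases hcells q.1 q.2 with ⟨m, h1, h2⟩ | ⟨m, h1, h2⟩ | h
    · exact (hcyc m).1 (h1 ▸ h2 ▸ hY)
    · exact (hcyc m).2 (h1 ▸ h2 ▸ hY)
    · exact hq (h ▸ hY)
  · rcases min_choice (univ.inf' univ_nonempty up) (univ.inf' univ_nonempty down) with h | h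
    · obtain ⟨m, -, hm⟩ := exists_mem_eq_inf' univ_nonempty up
      refine ⟨(ja m, ea m), by simpa using (hcyc m).1, ?_⟩
      simp only [mem_filter, mem_univ, true_and, not_not, hP, ε, h, hm, up]
      exact dvd_add_sub_mod hD _
    · obtain ⟨m, -, hm⟩ := exists_mem_eq_inf' univ_nonempty down
      refine ⟨(ja (m + 1), ea m), by simpa using (hcyc m).2, ?_⟩
      have := hM m
      simp only [mem_filter, mem_univ, true_and, not_not, ε, h, hm, down] at this ⊢
      rw [show Y' (ja (m + 1)) (ea m) = Y (ja (m + 1)) (ea m) - Y (ja (m + 1)) (ea m) % D by omega]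
      exact Nat.dvd_sub_mod _

theorem exists_round {D : ℕ} (hD : 0 < D) (N cap : J → E → ℕ) (R : J → ℕ) (C : E → ℕ)
    (hrow : ∀ j, ∑ e, N j e = D * R j) (hcol : ∀ e, ∑ j, N j e = D * C e)
    (hcap : ∀ j e, N j e ≤ D * cap j e) :
    ∃ y : J → E → ℕ, (∀ j, ∑ e, y j e = R j) ∧ (∀ e, ∑ j, y j e = C e) ∧
      ∀ j e, y j e ≤ cap j e := by
  induction hB : #{q : J × E | ¬ D ∣ N q.1 q.2} using Nat.strong_induction_on
    generalizing N with
  | _ B ih =>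
    by_cases hbad : ∃ j e, ¬ D ∣ N j e
    · obtain ⟨N', hrow', hcol', hcap', hlt⟩ := exists_fewer_not_dvd N cap
        (fun j => hrow j ▸ dvd_mul_right _ _) (fun e => hcol e ▸ dvd_mul_right _ _) hcap hbad
      exact ih _ (hB ▸ hlt) N' (fun j => (hrow' j).trans (hrow j))
        (fun e => (hcol' e).trans (hcol e)) hcap' rfl
    push Not at hbad
    have hdiv : ∀ j e, D * (N j e / D) = N j e := fun j e => Nat.mul_div_cancel' (hbad j e)
    refine ⟨fun j e => N j e / D, fun j => ?_, fun e => ?_,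
      fun j e => Nat.div_le_of_le_mul (hcap j e)⟩
    · exact Nat.eq_of_mul_eq_mul_left hD (by simp only [mul_sum, hdiv, hrow])
    · exact Nat.eq_of_mul_eq_mul_left hD (by simp only [mul_sum, hdiv, hcol])

theorem exists_equitable_split {β : Type*} [DecidableEq β] (S : Finset β) (g : J → E → ℕ)
    (R : J → ℕ) (C : E → ℕ) (hrow : ∀ j, ∑ e, g j e = #S * R j)
    (hcol : ∀ e, ∑ j, g j e = #S * C e) :
    ∃ u : β → J → E → ℕ, (∀ j e, ∑ b ∈ S, u b j e = g j e) ∧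
      (∀ b ∈ S, ∀ j, ∑ e, u b j e = R j) ∧ ∀ b ∈ S, ∀ e, ∑ j, u b j e = C e := by
  induction S using Finset.induction_on generalizing g with
  | empty =>
    refine ⟨0, fun j e => ?_, by simp, by simp⟩
    have := hrow j
    rw [card_empty, zero_mul, sum_eq_zero_iff] at this
    simp [this e (mem_univ e)]
  | @insert b S hb ih =>
    rw [card_insert_of_notMem hb] at hrow hcol
    obtain ⟨y, hyrow, hycol, hyg⟩ := exists_round (Nat.succ_pos _) g g R C hrow hcol
      fun j e => Nat.le_mul_of_pos_left _ (Nat.succ_pos _)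
    obtain ⟨u, hsum, hurow, hucol⟩ := ih (fun j e => g j e - y j e)
      (fun j => by
        rw [sum_tsub_distrib _ fun e _ => hyg j e, hrow, hyrow, add_one_mul, Nat.add_sub_cancel])
      (fun e => by
        rw [sum_tsub_distrib _ fun j _ => hyg j e, hcol, hycol, add_one_mul, Nat.add_sub_cancel])
    have hupd : ∀ b' ∈ S, update u b y b' = u b' :=
      fun b' hb' => update_of_ne (ne_of_mem_of_not_mem hb' hb) _ _
    refine ⟨update u b y, fun j e => ?_, fun b' hb' j => ?_, fun b' hb' e => ?_⟩
    · rw [sum_insert hb, update_self, sum_congr rfl fun b' hb' => by rw [hupd b' hb'], hsum]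
      exact Nat.add_sub_cancel' (hyg j e)
    · rcases mem_insert.mp hb' with rfl | hb'
      · simpa using hyrow j
      · rw [hupd b' hb']; exact hurow b' hb' j
    · rcases mem_insert.mp hb' with rfl | hb'
      · simpa using hycol e
      · rw [hupd b' hb']; exact hucol b' hb' e

end Rounding

section Edges

variable (ι β : Type*) [Fintype ι] [DecidableEq ι] [Fintype β]

def multipartiteEdges (h : ℕ) : Finset (Finset (ι × β)) :=
  (powersetCard h univ).filter fun e => ∀ a : ι, #(e.filter fun x => x.1 = a) ≤ 1

variable {ι β}

lemma mem_multipartiteEdges {h : ℕ} {e : Finset (ι × β)} :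
    e ∈ multipartiteEdges ι β h ↔ #e = h ∧ Set.InjOn Prod.fst (e : Set (ι × β)) := by
  simp only [multipartiteEdges, mem_filter, mem_powersetCard, subset_univ, true_and, card_le_one]
  exact and_congr_right fun _ => ⟨fun H x hx y hy hxy => H x.1 x ⟨hx, rfl⟩ y ⟨hy, hxy.symm⟩,
    fun H a x hx y hy => H hx.1 hy.1 (hx.2.trans hy.2.symm)⟩

end Edges

section PartialEdge

variable {ι β : Type*} {h : ℕ} {A : Finset ι} {e : Finset (ι × β)} {a : ι}

def IsPartialEdge (h : ℕ) (A : Finset ι) (e : Finset (ι × β)) : Prop :=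
  Set.InjOn Prod.fst (e : Set (ι × β)) ∧ #e ≤ h ∧ ∀ x ∈ e, x.1 ∈ A

variable [DecidableEq ι]

lemma isPartialEdge_insert_iff (he : ∀ x ∈ e, x.1 ≠ a) :
    IsPartialEdge h (insert a A) e ↔ IsPartialEdge h A e := by
  refine and_congr_right fun _ => and_congr_right fun _ => forall₂_congr fun x hx => ?_
  simp [he x hx]

lemma isPartialEdge_insert_insert_iff [DecidableEq β] (ha : a ∉ A) {b : β} (hb : (a, b) ∉ e) :
    IsPartialEdge h (insert a A) (insert (a, b) e) ↔ IsPartialEdge h A e ∧ #e < h := by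
  simp only [IsPartialEdge, coe_insert, card_insert_of_notMem hb, forall_mem_insert,
    mem_insert_self, true_and, Nat.add_one_le_iff]
  constructor
  · rintro ⟨hinj, hcard, hparts⟩
    refine ⟨⟨hinj.mono (Set.subset_insert _ _), hcard.le, fun x hx => ?_⟩, hcard⟩
    refine (mem_insert.mp (hparts x hx)).resolve_left fun hxa => hb ?_
    rwa [hinj (Set.mem_insert _ _) (Set.mem_insert_of_mem _ (mem_coe.mpr hx)) hxa.symm]
  · rintro ⟨⟨hinj, -, hparts⟩, hlt⟩
    refine ⟨(Set.injOn_insert (by simpa using hb)).mpr ⟨hinj, ?_⟩, hlt,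
      fun x hx => mem_insert_of_mem (hparts x hx)⟩
    rintro ⟨x, hx, hxa⟩
    exact ha (by simpa [hxa] using hparts x hx)

end PartialEdge

section ExtCount

variable {ι β : Type*} [Fintype ι] [Fintype β]

open Classical in
/-- The number of edges of `multipartiteEdges ι β h` whose trace on the parts in `A` is `e`. -/
noncomputable def extCount (h : ℕ) (A : Finset ι) (e : Finset (ι × β)) : ℕ :=
  if IsPartialEdge h A e then
    (Fintype.card ι - #A).choose (h - #e) * Fintype.card β ^ (h - #e) else 0

open Classical in
/-- The number of those edges that moreover contain a given vertex of a given part outside `A`. -/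
noncomputable def extCountThrough (h : ℕ) (A : Finset ι) (e : Finset (ι × β)) : ℕ :=
  if IsPartialEdge h A e ∧ #e < h then
    (Fintype.card ι - #A - 1).choose (h - #e - 1) * Fintype.card β ^ (h - #e - 1) else 0

variable {h : ℕ} {A : Finset ι} {e : Finset (ι × β)} {a : ι}

lemma isPartialEdge_of_extCount_ne_zero (he : extCount h A e ≠ 0) :
    IsPartialEdge h A e ∧ h - #e ≤ Fintype.card ι - #A := by
  unfold extCount at he
  split_ifs at he with hp
  · exact ⟨hp, by_contra fun hlt => he (by rw [Nat.choose_eq_zero_of_lt (by omega), zero_mul])⟩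
  · exact absurd rfl he

lemma extCount_eq_zero (he : ¬ IsPartialEdge h A e) : extCount h A e = 0 := by
  simp [extCount, he]

lemma extCountThrough_eq_zero (he : ¬ IsPartialEdge h A e) : extCountThrough h A e = 0 := by
  simp [extCountThrough, he]

lemma extCount_mul_sub_card (hA : #A < Fintype.card ι) :
    extCount h A e * (h - #e) =
      (Fintype.card ι - #A) * (Fintype.card β * extCountThrough h A e) := by
  by_cases hp : IsPartialEdge h A e
  · unfold extCount extCountThrough
    by_cases hlt : #e < h
    · rw [if_pos hp, if_pos ⟨hp, hlt⟩]
      obtain ⟨N, hN⟩ := Nat.exists_eq_add_one_of_ne_zero (by omega : Fintype.card ι - #A ≠ 0)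
      obtain ⟨t, ht⟩ := Nat.exists_eq_add_one_of_ne_zero (by omega : h - #e ≠ 0)
      rw [hN, ht, show N + 1 - 1 = N by omega, show t + 1 - 1 = t by omega]
      calc _ = (N + 1).choose (t + 1) * (t + 1) * Fintype.card β ^ (t + 1) := by ring
        _ = _ := by rw [← Nat.add_one_mul_choose_eq, pow_succ]; ring
    · rw [if_pos hp, if_neg fun h' => hlt h'.2, show h - #e = 0 by have := hp.2.1; omega]
      simp
  · simp [extCount_eq_zero hp, extCountThrough_eq_zero hp]

variable [DecidableEq ι]

lemma extCount_insert_add (ha : a ∉ A) (he : ∀ x ∈ e, x.1 ≠ a) :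
    extCount h (insert a A) e + Fintype.card β * extCountThrough h A e = extCount h A e := by
  have hA : #A < Fintype.card ι := card_lt_univ_of_notMem ha
  by_cases hp : IsPartialEdge h A e
  · unfold extCount extCountThrough
    obtain ⟨N, hN⟩ := Nat.exists_eq_add_one_of_ne_zero (by omega : Fintype.card ι - #A ≠ 0)
    rw [isPartialEdge_insert_iff he, card_insert_of_notMem ha, if_pos hp, if_pos hp,
      show Fintype.card ι - (#A + 1) = N by omega, hN]
    by_cases hlt : #e < h
    · obtain ⟨t, ht⟩ := Nat.exists_eq_add_one_of_ne_zero (by omega : h - #e ≠ 0)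
      rw [if_pos ⟨hp, hlt⟩, ht, show N + 1 - 1 = N by omega, show t + 1 - 1 = t by omega,
        Nat.choose_succ_succ', pow_succ]
      ring
    · rw [if_neg fun h' => hlt h'.2, show h - #e = 0 by have := hp.2.1; omega]
      simp
  · simp [extCount_eq_zero hp, extCountThrough_eq_zero hp,
      extCount_eq_zero (by rwa [isPartialEdge_insert_iff he] : ¬ IsPartialEdge h (insert a A) e)]

variable [DecidableEq β]

lemma extCount_insert_insert (ha : a ∉ A) {b : β} (hb : (a, b) ∉ e) :
    extCount h (insert a A) (insert (a, b) e) = extCountThrough h A e := by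
  unfold extCount extCountThrough
  rw [card_insert_of_notMem ha, card_insert_of_notMem hb, Nat.sub_add_eq, Nat.sub_add_eq]
  by_cases hp : IsPartialEdge h A e ∧ #e < h
  · rw [if_pos ((isPartialEdge_insert_insert_iff ha hb).mpr hp), if_pos hp]
  · rw [if_neg (mt (isPartialEdge_insert_insert_iff ha hb).mp hp), if_neg hp]

/-- An edge with trace `e` on the parts `insert a A` has trace `e` on `A` if it misses the part `a`,
and trace `e.erase (a, b)` if it meets it in `(a, b)`. -/
lemma extCount_insert (ha : a ∉ A) (e : Finset (ι × β)) :
    extCount h (insert a A) e = extCount h A e - Fintype.card β * extCountThrough h A e +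
      ∑ b, if (a, b) ∈ e then extCountThrough h A (e.erase (a, b)) else 0 := by
  by_cases hx : ∃ b, (a, b) ∈ e
  · obtain ⟨b₀, hb₀⟩ := hx
    have hp : ¬ IsPartialEdge h A e := fun hp => ha (hp.2.2 _ hb₀)
    have hterm : ∀ b, (if (a, b) ∈ e then extCountThrough h A (e.erase (a, b)) else 0) =
        if b = b₀ then extCount h (insert a A) e else 0 := by
      intro b
      by_cases hb : (a, b) ∈ e
      · rw [if_pos hb, ← extCount_insert_insert ha (notMem_erase _ _), insert_erase hb]
        split_ifs with hbb
        · rfl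
        · by_contra hne
          have hinj := (isPartialEdge_of_extCount_ne_zero hne).1.1
          exact hbb (congrArg Prod.snd (hinj (mem_coe.mpr hb) (mem_coe.mpr hb₀) rfl))
      · rw [if_neg hb, if_neg (by rintro rfl; exact hb hb₀)]
    simp [extCount_eq_zero hp, extCountThrough_eq_zero hp, hterm]
  · push Not at hx
    have := extCount_insert_add (h := h) ha (e := e) fun x hx' hxa => hx x.2 (hxa ▸ hx')
    simp only [hx, if_false, sum_const_zero, add_zero]
    omega

lemma extCount_empty (e : Finset (ι × β)) :
    extCount h ∅ e = if e = ∅ then (Fintype.card ι).choose h * Fintype.card β ^ h else 0 := by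
  have : IsPartialEdge h ∅ e ↔ e = ∅ :=
    ⟨fun hp => eq_empty_of_forall_notMem fun x hx => notMem_empty _ (hp.2.2 x hx),
      fun he => by simp [IsPartialEdge, he]⟩
  by_cases he : e = ∅
  · rw [extCount, if_pos (this.mpr he), if_pos he, he]
    simp
  · rw [extCount, if_neg (mt this.mp he), if_neg he]

lemma extCount_univ (e : Finset (ι × β)) :
    extCount h univ e = if e ∈ multipartiteEdges ι β h then 1 else 0 := by
  by_cases hp : IsPartialEdge h univ e
  · have ⟨hinj, hcard, _⟩ := hp
    rcases hcard.lt_or_eq with hlt | rfl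
    · simp [extCount, hp, mem_multipartiteEdges, hlt.ne,
        Nat.choose_eq_zero_of_lt (by omega : 0 < h - #e)]
    · simp [extCount, hp, mem_multipartiteEdges, hinj]
  · rw [extCount_eq_zero hp, if_neg]
    rw [mem_multipartiteEdges]
    exact fun he => hp ⟨he.2, he.1.le, fun _ _ => mem_univ _⟩

end ExtCount

section Factorization

variable {ι β κ : Type*} [Fintype ι] [DecidableEq ι] [Fintype β] [DecidableEq β]

/-- In the factor `j`, `u b j e` copies of the partial edge `e` gain the vertex `(a, b)`. -/
def extendByPart (a : ι) (c : κ → Finset (ι × β) → ℕ) (u : β → κ → Finset (ι × β) → ℕ) (j : κ)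
    (e' : Finset (ι × β)) : ℕ :=
  c j e' - ∑ b, u b j e' + ∑ b, ∑ e with insert (a, b) e = e', u b j e

lemma sum_filter_extendByPart (a : ι) (c : κ → Finset (ι × β) → ℕ)
    (u : β → κ → Finset (ι × β) → ℕ) (j : κ) (P : Finset (ι × β) → Prop) [DecidablePred P] :
    ∑ e' with P e', extendByPart a c u j e' =
      ∑ e with P e, (c j e - ∑ b, u b j e) + ∑ b, ∑ e with P (insert (a, b) e), u b j e := by
  simp only [extendByPart]
  rw [sum_add_distrib, sum_comm]
  congr 1
  refine sum_congr rfl fun b _ => ?_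
  rw [sum_fiberwise_eq_sum_filter]
  simp only [mem_filter, mem_univ, true_and]

variable [Fintype κ]

/-- `c j e` is the multiplicity of the partial edge `e` in the `j`-th factor once the parts in `A`
have been processed. -/
structure IsPartialFactorization (h r s : ℕ) (A : Finset ι) (c : κ → Finset (ι × β) → ℕ) :
    Prop where
  sum_eq_extCount : ∀ e, ∑ j, c j e = extCount h A e
  sum_eq : ∀ j, ∑ e, c j e = s
  degree_eq : ∀ j v, v.1 ∈ A → ∑ e with v ∈ e, c j e = r

namespace IsPartialFactorization

variable {h r s : ℕ} {A : Finset ι} {a : ι} {c : κ → Finset (ι × β) → ℕ}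

lemma le_extCount (hc : IsPartialFactorization h r s A c) (j : κ) (e : Finset (ι × β)) :
    c j e ≤ extCount h A e :=
  hc.sum_eq_extCount e ▸ single_le_sum (f := fun j => c j e) (fun _ _ => Nat.zero_le _)
    (mem_univ j)

lemma extCount_ne_zero (hc : IsPartialFactorization h r s A c) {j : κ} {e : Finset (ι × β)}
    (hce : c j e ≠ 0) : extCount h A e ≠ 0 :=
  fun h0 => hce (Nat.eq_zero_of_le_zero (h0 ▸ hc.le_extCount j e))

lemma sum_mul_card (hc : IsPartialFactorization h r s A c) (j : κ) :
    ∑ e, c j e * #e = #A * Fintype.card β * r := by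
  have hdeg : ∀ v : ι × β, ∑ e with v ∈ e, c j e = if v.1 ∈ A then r else 0 := fun v => by
    split_ifs with hv
    · exact hc.degree_eq j v hv
    · refine sum_eq_zero fun e he => by_contra fun hce => hv ?_
      exact (isPartialEdge_of_extCount_ne_zero (hc.extCount_ne_zero hce)).1.2.2 v
        (mem_filter.mp he).2
  calc ∑ e, c j e * #e = ∑ v : ι × β, ∑ e with v ∈ e, c j e := by
        simp only [sum_filter]
        rw [sum_comm]
        simp [mul_comm]
    _ = #A * Fintype.card β * r := by
        rw [sum_congr rfl fun v _ => hdeg v, sum_ite, sum_const_zero, add_zero, sum_const,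
          smul_eq_mul, show univ.filter (fun v : ι × β => v.1 ∈ A) = A ×ˢ univ by ext; simp,
          card_product, card_univ]

/-- Rounding the expected numbers `c j e * (h - #e) / (n - #A)` of copies of `e` in the factor `j`
to be extended by a vertex of the next part, and sharing them out equitably between its vertices. -/
lemma exists_extension [DecidableEq κ] (hc : IsPartialFactorization h r s A c) (ha : a ∉ A)
    (hs : Fintype.card ι * Fintype.card β * r = h * s) :
    ∃ u : β → κ → Finset (ι × β) → ℕ, (∀ j e, ∑ b, u b j e ≤ c j e) ∧
      (∀ b j, ∑ e, u b j e = r) ∧ ∀ b e, ∑ j, u b j e = extCountThrough h A e := by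
  have hA : #A < Fintype.card ι := card_lt_univ_of_notMem ha
  have hrow : ∀ j, ∑ e, c j e * (h - #e) = (Fintype.card ι - #A) * (Fintype.card β * r) := by
    intro j
    have hsplit : ∀ e, c j e * (h - #e) + c j e * #e = c j e * h := fun e => by
      rcases eq_or_ne (c j e) 0 with h0 | h0
      · simp [h0]
      · rw [← mul_add, Nat.sub_add_cancel
          (isPartialEdge_of_extCount_ne_zero (hc.extCount_ne_zero h0)).1.2.1]
    have := congrArg (fun f => ∑ e, f e) (funext hsplit)
    simp only [sum_add_distrib, ← sum_mul, hc.sum_eq, hc.sum_mul_card] at this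
    have hnpr : Fintype.card ι * (Fintype.card β * r) = s * h := by
      rw [← mul_assoc, hs, mul_comm]
    rw [Nat.sub_mul, hnpr, ← this, ← mul_assoc, Nat.add_sub_cancel]
  have hcol : ∀ e, ∑ j, c j e * (h - #e) =
      (Fintype.card ι - #A) * (Fintype.card β * extCountThrough h A e) := fun e => by
    rw [← sum_mul, hc.sum_eq_extCount, extCount_mul_sub_card hA]
  have hcap : ∀ j e, c j e * (h - #e) ≤ (Fintype.card ι - #A) * c j e := fun j e => by
    rcases eq_or_ne (c j e) 0 with h0 | h0
    · simp [h0]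
    · rw [mul_comm]
      exact Nat.mul_le_mul_right _ (isPartialEdge_of_extCount_ne_zero (hc.extCount_ne_zero h0)).2
  obtain ⟨z, hzrow, hzcol, hzc⟩ := exists_round (by omega) _ c _ _ hrow hcol hcap
  obtain ⟨u, hu, hurow, hucol⟩ := exists_equitable_split univ z (fun _ => r) (extCountThrough h A)
    (by simpa using hzrow) (by simpa using hzcol)
  exact ⟨u, fun j e => (hu j e).trans_le (hzc j e), fun b j => hurow b (mem_univ b) j,
    fun b e => hucol b (mem_univ b) e⟩

lemma degree_extendByPart (hc : IsPartialFactorization h r s A c) (ha : a ∉ A)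
    {u : β → κ → Finset (ι × β) → ℕ} (hule : ∀ j e, ∑ b, u b j e ≤ c j e)
    (hurow : ∀ b j, ∑ e, u b j e = r) (j : κ) {v : ι × β} (hv : v.1 ∈ insert a A) :
    ∑ e with v ∈ e, extendByPart a c u j e = r := by
  have hc0 : ∀ e, c j e ≠ 0 → ∀ x ∈ e, x.1 ∈ A := fun e hce =>
    (isPartialEdge_of_extCount_ne_zero (hc.extCount_ne_zero hce)).1.2.2
  rw [sum_filter_extendByPart a c u j (v ∈ ·)]
  rcases mem_insert.mp hv with hva | hvA
  · have hold : ∑ e with v ∈ e, (c j e - ∑ b, u b j e) = 0 := sum_eq_zero fun e he => by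
      have : c j e = 0 := by_contra fun hce => ha (hva ▸ hc0 e hce v (mem_filter.mp he).2)
      simp [this]
    have hnew : ∀ b, ∑ e with v ∈ insert (a, b) e, u b j e = if v.2 = b then r else 0 := by
      intro b
      split_ifs with hb
      · rw [← hurow b j]
        exact sum_filter_of_ne fun e _ _ => by rw [← hva, ← hb]; exact mem_insert_self _ _
      · refine sum_eq_zero fun e he => by_contra fun hne => ?_
        rcases mem_insert.mp (mem_filter.mp he).2 with hvb | hve
        · exact hb (by rw [hvb])
        · refine ha (hva ▸ hc0 e (fun h0 => hne ?_) v hve)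
          exact Nat.eq_zero_of_le_zero (h0 ▸ (single_le_sum (f := fun b => u b j e)
            (fun _ _ => Nat.zero_le _) (mem_univ b)).trans (hule j e))
    rw [hold, zero_add, sum_congr rfl fun b _ => hnew b, sum_ite_eq, if_pos (mem_univ _)]
  · have hne : ∀ b, v ≠ (a, b) := fun b hvb => ha (by simpa [hvb] using hvA)
    simp only [mem_insert, hne, false_or]
    rw [sum_comm, ← sum_add_distrib, ← hc.degree_eq j v hvA]
    exact sum_congr rfl fun e _ => Nat.sub_add_cancel (hule j e)

theorem exists_insert [DecidableEq κ] (hc : IsPartialFactorization h r s A c) (ha : a ∉ A)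
    (hs : Fintype.card ι * Fintype.card β * r = h * s) :
    ∃ c' : κ → Finset (ι × β) → ℕ, IsPartialFactorization h r s (insert a A) c' := by
  obtain ⟨u, hule, hurow, hucol⟩ := hc.exists_extension ha hs
  refine ⟨extendByPart a c u, ⟨fun e' => ?_, fun j => ?_,
    fun j v hv => hc.degree_extendByPart ha hule hurow j hv⟩⟩
  · have hpush : ∑ j, ∑ b, ∑ e with insert (a, b) e = e', u b j e =
        ∑ b, ∑ e with insert (a, b) e = e', extCountThrough h A e := by
      rw [sum_comm]
      exact sum_congr rfl fun b _ => by rw [sum_comm]; simp only [hucol]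
    rw [extCount_insert ha]
    simp only [extendByPart]
    rw [sum_add_distrib, sum_tsub_distrib _ fun j _ => hule j e', hc.sum_eq_extCount, sum_comm,
      hpush]
    simp only [hucol, sum_const, card_univ, smul_eq_mul]
    exact congrArg _ (sum_congr rfl fun b _ => sum_filter_insert_eq _ _
      (fun e he => extCountThrough_eq_zero fun hp => ha (hp.2.2 _ he)) e')
  · have hle : ∑ b, ∑ e, u b j e ≤ ∑ e, c j e := by
      rw [sum_comm]; exact sum_le_sum fun e _ => hule j e
    have := sum_filter_extendByPart a c u j fun _ => True
    simp only [filter_true] at this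
    rw [this, sum_tsub_distrib _ fun e _ => hule j e, sum_comm (f := fun e b => u b j e),
      ← hc.sum_eq j]
    omega

end IsPartialFactorization

lemma exists_isPartialFactorization [DecidableEq κ] {h r s : ℕ}
    (hs : Fintype.card ι * Fintype.card β * r = h * s)
    (hks : Fintype.card κ * s = (Fintype.card ι).choose h * Fintype.card β ^ h) (A : Finset ι) :
    ∃ c : κ → Finset (ι × β) → ℕ, IsPartialFactorization h r s A c := by
  induction A using Finset.induction_on with
  | empty =>
    refine ⟨fun _ e => if e = ∅ then s else 0, ⟨fun e => ?_, fun j => by simp, by simp⟩⟩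
    rw [extCount_empty, ← hks]
    split_ifs <;> simp
  | insert a A ha ih =>
    obtain ⟨c, hc⟩ := ih
    exact hc.exists_insert ha hs

theorem exists_regular_factorization [DecidableEq κ] {h r s : ℕ}
    (hs : Fintype.card ι * Fintype.card β * r = h * s)
    (hks : Fintype.card κ * s = (Fintype.card ι).choose h * Fintype.card β ^ h) :
    ∃ F : κ → Multiset (Finset (ι × β)), ∑ j, F j = (multipartiteEdges ι β h).val ∧
      ∀ j v, ((F j).filter (v ∈ ·)).card = r := by
  obtain ⟨c, hc⟩ := exists_isPartialFactorization hs hks univ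
  refine ⟨fun j => ∑ e, c j e • {e}, Multiset.ext.mpr fun e => ?_, fun j v => ?_⟩
  · simp [Multiset.count_sum', Multiset.count_singleton, hc.sum_eq_extCount, extCount_univ]
    simp only [Multiset.count_eq_of_nodup (nodup _), mem_val]
  · rw [← Multiset.countP_eq_card_filter, ← Multiset.coe_countPAddMonoidHom, map_sum]
    simp only [Multiset.coe_countPAddMonoidHom, Multiset.countP_nsmul]
    simpa [Multiset.countP_eq_card_filter, Multiset.filter_singleton, apply_ite Multiset.card,
      sum_filter] using hc.degree_eq j v (mem_univ _)

lemma mul_choose_mul_pow (n p : ℕ) {h : ℕ} (hh : 1 ≤ h) :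
    n * p * ((n - 1).choose (h - 1) * p ^ (h - 1)) = h * (n.choose h * p ^ h) := by
  calc _ = n * (n - 1).choose (h - 1) * (p ^ (h - 1) * p) := by ring
    _ = _ := by rw [Nat.mul_choose_sub_one n hh, ← pow_succ, Nat.sub_add_cancel hh]; ring

theorem card_filter_mem_multipartiteEdges {h : ℕ} (hh : 1 ≤ h) (v : ι × β) :
    #{e ∈ multipartiteEdges ι β h | v ∈ e} =
      (Fintype.card ι - 1).choose (h - 1) * Fintype.card β ^ (h - 1) := by
  obtain ⟨F, hF, hdeg⟩ := exists_regular_factorization (κ := Unit)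
    (mul_choose_mul_pow (Fintype.card ι) (Fintype.card β) hh) (by simp)
  rw [Fintype.sum_unique] at hF
  rw [← hdeg () v, hF, card_def, filter_val]

theorem dvd_of_regular_factorization {h r : ℕ} (hh : 1 ≤ h) (hn : h ≤ Fintype.card ι)
    (hp : 0 < Fintype.card β) (F : κ → Multiset (Finset (ι × β)))
    (hF : ∑ j, F j = (multipartiteEdges ι β h).val)
    (hreg : ∀ j v, ((F j).filter (v ∈ ·)).card = r) :
    h ∣ Fintype.card ι * Fintype.card β * r ∧
      r ∣ (Fintype.card ι - 1).choose (h - 1) * Fintype.card β ^ (h - 1) := by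
  obtain ⟨a⟩ : Nonempty ι := Fintype.card_pos_iff.mp (by omega)
  obtain ⟨b⟩ : Nonempty β := Fintype.card_pos_iff.mp hp
  have hdeg : Fintype.card κ * r =
      (Fintype.card ι - 1).choose (h - 1) * Fintype.card β ^ (h - 1) := by
    rw [← card_filter_mem_multipartiteEdges hh (a, b), card_def, filter_val, ← hF,
      Multiset.card_filter_sum]
    simp [hreg]
  have hpos : 0 < Fintype.card κ * r :=
    hdeg ▸ Nat.mul_pos (Nat.choose_pos (by omega)) (by positivity)
  obtain ⟨j⟩ : Nonempty κ := Fintype.card_pos_iff.mp (Nat.pos_of_mul_pos_right hpos)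
  have hcard : ∀ e ∈ F j, #e = h := fun e he => (mem_multipartiteEdges.mp (mem_val.mp
    (hF ▸ Multiset.mem_of_le (single_le_sum (fun _ _ => Multiset.zero_le _) (mem_univ j)) he))).1
  refine ⟨⟨(F j).card, ?_⟩, Dvd.intro_left _ hdeg⟩
  have := Multiset.sum_card_filter_mem (F j)
  rw [Multiset.map_congr rfl hcard, Multiset.map_const', Multiset.sum_replicate,
    smul_eq_mul] at this
  rw [mul_comm h, ← this]
  simp [hreg]

theorem exists_regular_factorization_of_dvd [DecidableEq κ] {h r s : ℕ} (hh : 1 ≤ h)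
    (hn : h ≤ Fintype.card ι) (hp : 0 < Fintype.card β)
    (hs : Fintype.card ι * Fintype.card β * r = h * s)
    (hk : (Fintype.card ι - 1).choose (h - 1) * Fintype.card β ^ (h - 1) = r * Fintype.card κ) :
    ∃ F : κ → Multiset (Finset (ι × β)), ∑ j, F j = (multipartiteEdges ι β h).val ∧
      ∀ j v, ((F j).filter (v ∈ ·)).card = r := by
  have hr : 0 < r := Nat.pos_of_mul_pos_right (hk ▸ Nat.mul_pos (Nat.choose_pos (by omega))
    (by positivity) : 0 < r * Fintype.card κ)
  refine exists_regular_factorization hs (Nat.eq_of_mul_eq_mul_right (Nat.mul_pos hh hr) ?_)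
  calc Fintype.card κ * s * (h * r) = (r * Fintype.card κ) * (h * s) := by ring
    _ = Fintype.card ι * Fintype.card β * ((Fintype.card ι - 1).choose (h - 1) *
          Fintype.card β ^ (h - 1)) * r := by rw [← hk, ← hs]; ring
    _ = _ := by rw [mul_choose_mul_pow _ _ hh]; ring

end Factorization

theorem baranyai_multipartite_general (n h p r : ℕ) (hh : 2 ≤ h) (hn : h ≤ n)
    (hp : 1 ≤ p) :
    (∃ (k : ℕ) (F : Fin k → Multiset (Finset (Fin n × Fin p))),
        (∑ i, F i)
          = ((Finset.powersetCard h (Finset.univ : Finset (Fin n × Fin p))).filter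
              (fun e => ∀ a : Fin n, (e.filter (fun x => x.1 = a)).card ≤ 1)).val ∧
        ∀ i (v : Fin n × Fin p), ((F i).filter (fun e => v ∈ e)).card = r)
    ↔ (h ∣ n * p * r ∧ r ∣ Nat.choose (n - 1) (h - 1) * p ^ (h - 1)) := by
  -- the two sides differ only in the `Decidable` instance of the `∀`
  have hE : (powersetCard h univ).filter (fun e => ∀ a : Fin n, #(e.filter (·.1 = a)) ≤ 1) =
      multipartiteEdges (Fin n) (Fin p) h := by
    unfold multipartiteEdges
    congr
  have hn' : h ≤ Fintype.card (Fin n) := by rwa [Fintype.card_fin]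
  have hp' : 0 < Fintype.card (Fin p) := by rw [Fintype.card_fin]; omega
  rw [hE]
  constructor
  · rintro ⟨k, F, hF, hreg⟩
    simpa using dvd_of_regular_factorization (by omega) hn' hp' F hF hreg
  · rintro ⟨⟨s, hs⟩, ⟨k, hk⟩⟩
    exact ⟨k, exists_regular_factorization_of_dvd (by omega) hn' hp' (by simpa using hs)
      (by simpa using hk)⟩

/-- Multipartite Baranyai theorem: the complete `h`-uniform `n`-partite hypergraph
`K^h_{n×p}` (parts of size `p`, edges all transversal `h`-subsets) is
`r`-factorizable iff `h ∣ n * p * r` and `r ∣ C(n-1, h-1) * p^(h-1)`. -/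
theorem baranyai_multipartite (n h p r : ℕ) (hh : 2 ≤ h) (hn : h ≤ n)
    (hp : 1 ≤ p) (hr : 1 ≤ r) :
    (∃ (k : ℕ) (F : Fin k → Multiset (Finset (Fin n × Fin p))),
        (∑ i, F i)
          = ((Finset.powersetCard h (Finset.univ : Finset (Fin n × Fin p))).filter
              (fun e => ∀ a : Fin n, (e.filter (fun x => x.1 = a)).card ≤ 1)).val ∧
        ∀ i (v : Fin n × Fin p), ((F i).filter (fun e => v ∈ e)).card = r)
    ↔ (h ∣ n * p * r ∧ r ∣ Nat.choose (n - 1) (h - 1) * p ^ (h - 1)) :=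
  baranyai_multipartite_general n h p r hh hn hp
end
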